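/- arXiv:2111.03256 — 14 statements merged into one kernel-verified Lean document; each statement's English description precedes it below -/
import Mathlib

section
/- For all real t with 0 ≤ t ≤ 1 and all x > 1, one has (x+1)/(x-1) ≥ (1-t)^2·(x+x^t)/(x-x^t) + t^2·(x^t+1)/(x^t-1). -/
/-!
Put `f y = (y + 1) / (y - 1)`. Since `(x + x^t) / (x - x^t) = f (x^(1-t))`, the left-hand side is
`(1 - t) · ((1 - t) f (x^(1-t))) + t · (t f (x^t))`, a convex combination of two values of
`s ↦ s f (x^s)`, so it suffices that `s f (x^s) ≤ f x` for `0 ≤ s ≤ 1`. Cleared of denominators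
this says that `z ↦ (1-s) z^(s+1) + (1+s) z^s - (1+s) z - (1-s)` is nonnegative for `z ≥ 1`;
it vanishes at `z = 1` and its derivative is nonnegative by weighted AM-GM.
-/

open Set

namespace Real

variable {s z : ℝ}

theorem one_le_one_sub_mul_rpow_add_mul_rpow_sub_one (hs0 : 0 ≤ s) (hs1 : s ≤ 1) (hz : 0 < z) :
    1 ≤ (1 - s) * z ^ s + s * z ^ (s - 1) := by
  have hgeom : (z ^ s) ^ (1 - s) * (z ^ (s - 1)) ^ s = 1 := by
    rw [← rpow_mul hz.le, ← rpow_mul hz.le, ← rpow_add hz,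
      show s * (1 - s) + (s - 1) * s = 0 by ring, rpow_zero]
  calc 1 = (z ^ s) ^ (1 - s) * (z ^ (s - 1)) ^ s := hgeom.symm
    _ ≤ (1 - s) * z ^ s + s * z ^ (s - 1) :=
      geom_mean_le_arith_mean2_weighted (by linarith) hs0 (by positivity) (by positivity)
        (by ring)

theorem hasDerivAt_rpow_add_one_sub (hz : 0 < z) :
    HasDerivAt (fun y => (1 - s) * y ^ (s + 1) + (1 + s) * y ^ s - (1 + s) * y - (1 - s))
      ((1 + s) * ((1 - s) * z ^ s + s * z ^ (s - 1) - 1)) z := by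
  have hpow_succ : HasDerivAt (fun y : ℝ => y ^ (s + 1)) ((s + 1) * z ^ s) z := by
    simpa using hasDerivAt_rpow_const (p := s + 1) (Or.inl hz.ne')
  have hpow := hasDerivAt_rpow_const (p := s) (Or.inl hz.ne')
  exact ((((hpow_succ.const_mul (1 - s)).add (hpow.const_mul (1 + s))).sub
    ((hasDerivAt_id z).const_mul (1 + s))).sub_const (1 - s)).congr_deriv (by ring)

theorem rpow_add_one_sub_nonneg (hs0 : 0 ≤ s) (hs1 : s ≤ 1) (hz : 1 ≤ z) :
    0 ≤ (1 - s) * z ^ (s + 1) + (1 + s) * z ^ s - (1 + s) * z - (1 - s) := by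
  have hmono : MonotoneOn
      (fun y => (1 - s) * y ^ (s + 1) + (1 + s) * y ^ s - (1 + s) * y - (1 - s)) (Ioi 0) := by
    refine monotoneOn_of_hasDerivWithinAt_nonneg
      (f' := fun y => (1 + s) * ((1 - s) * y ^ s + s * y ^ (s - 1) - 1)) (convex_Ioi 0)
      (fun y hy => (hasDerivAt_rpow_add_one_sub hy).continuousAt.continuousWithinAt) ?_ ?_ <;>
      rw [interior_Ioi]
    · exact fun y hy => (hasDerivAt_rpow_add_one_sub hy).hasDerivWithinAt
    intro y hy
    have := one_le_one_sub_mul_rpow_add_mul_rpow_sub_one hs0 hs1 hy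
    exact mul_nonneg (by linarith) (by linarith)
  simpa using hmono (by norm_num : (1 : ℝ) ∈ Ioi 0) (by simp only [mem_Ioi]; linarith) hz

theorem mul_rpow_add_one_div_rpow_sub_one_le (hs0 : 0 ≤ s) (hs1 : s ≤ 1) (hz : 1 < z) :
    s * ((z ^ s + 1) / (z ^ s - 1)) ≤ (z + 1) / (z - 1) := by
  rcases hs0.eq_or_lt with rfl | hs0
  · rw [zero_mul]
    exact div_nonneg (by linarith) (by linarith)
  have hzs : 1 < z ^ s := one_lt_rpow hz hs0
  have hnonneg := rpow_add_one_sub_nonneg hs0.le hs1 hz.le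
  rw [rpow_add_one (by linarith)] at hnonneg
  rw [mul_div_assoc', div_le_div_iff₀ (by linarith) (by linarith)]
  nlinarith

theorem add_rpow_div_sub_rpow (t : ℝ) (hz : 0 < z) :
    (z + z ^ t) / (z - z ^ t) = (z ^ (1 - t) + 1) / (z ^ (1 - t) - 1) := by
  have hsplit : z ^ t * z ^ (1 - t) = z := by rw [← rpow_add hz, add_sub_cancel, rpow_one]
  have hzt : z ^ t ≠ 0 := (rpow_pos_of_pos hz t).ne'
  conv_rhs => rw [← mul_div_mul_left _ _ hzt, mul_add, mul_sub, mul_one, hsplit]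

end Real

theorem ineq_lemma_I (t x : ℝ) (ht0 : 0 ≤ t) (ht1 : t ≤ 1) (hx : 1 < x) :
    (1 - t) ^ 2 * ((x + x ^ t) / (x - x ^ t)) + t ^ 2 * ((x ^ t + 1) / (x ^ t - 1)) ≤
      (x + 1) / (x - 1) := by
  rw [Real.add_rpow_div_sub_rpow t (by linarith)]
  calc (1 - t) ^ 2 * ((x ^ (1 - t) + 1) / (x ^ (1 - t) - 1)) + t ^ 2 * ((x ^ t + 1) / (x ^ t - 1))
      = (1 - t) * ((1 - t) * ((x ^ (1 - t) + 1) / (x ^ (1 - t) - 1)))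
        + t * (t * ((x ^ t + 1) / (x ^ t - 1))) := by ring
    _ ≤ (1 - t) * ((x + 1) / (x - 1)) + t * ((x + 1) / (x - 1)) := by
      have hfirst := Real.mul_rpow_add_one_div_rpow_sub_one_le (sub_nonneg.2 ht1) (by linarith) hx
      have hsecond := Real.mul_rpow_add_one_div_rpow_sub_one_le ht0 ht1 hx
      gcongr
    _ = (x + 1) / (x - 1) := by ring
end

section
/- For all real t with t ≥ 1 and all x > 1, one has (x+1)/(x-1) ≤ (1-t)^2·(x+x^t)/(x-x^t) + t^2·(x^t+1)/(x^t-1). -/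
open Real

-- L0: tanh bound
lemma aux_sinh_le (B : ℝ) (hB : 0 ≤ B) : Real.sinh B ≤ B * Real.cosh B := by
  have h : Monotone (fun z : ℝ => z * Real.cosh z - Real.sinh z) := by
    apply monotone_of_deriv_nonneg
    · fun_prop
    · intro z
      have hd : HasDerivAt (fun z : ℝ => z * Real.cosh z - Real.sinh z)
          (1 * Real.cosh z + z * Real.sinh z - Real.cosh z) z :=
        ((hasDerivAt_id z).mul (Real.hasDerivAt_cosh z)).sub (Real.hasDerivAt_sinh z)
      rw [hd.deriv]
      have : z * Real.sinh z ≥ 0 := by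
        rcases le_total 0 z with h | h
        · exact mul_nonneg h (Real.sinh_nonneg_iff.2 h)
        · nlinarith [Real.sinh_nonpos_iff.2 h]
      linarith
  have := h hB
  simp at this
  linarith

-- L1: sinh z / z monotone
lemma aux_sinh_div (A B : ℝ) (hB : 0 ≤ B) (hBA : B ≤ A) : A * Real.sinh B ≤ B * Real.sinh A := by
  have h1 : Real.sinh A = Real.sinh B * Real.cosh (A - B) + Real.cosh B * Real.sinh (A - B) := by
    rw [← Real.sinh_add]; ring_nf
  have h2 : (1:ℝ) ≤ Real.cosh (A - B) := Real.one_le_cosh _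
  have h3 : A - B ≤ Real.sinh (A - B) := Real.self_le_sinh_iff.2 (by linarith)
  have h4 : 0 ≤ Real.sinh B := Real.sinh_nonneg_iff.2 hB
  have h5 : Real.sinh B ≤ B * Real.cosh B := aux_sinh_le B hB
  have h6 : 0 ≤ Real.cosh B := by positivity
  nlinarith [mul_nonneg (mul_nonneg hB h4) (by linarith : (0:ℝ) ≤ Real.cosh (A-B) - 1), mul_nonneg (mul_nonneg hB h6) (by linarith : (0:ℝ) ≤ Real.sinh (A-B) - (A-B)), mul_nonneg (by linarith : (0:ℝ) ≤ A-B) (by linarith : (0:ℝ) ≤ B*Real.cosh B - Real.sinh B)]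

-- L2: z * coth z monotone (cleared denominators)
lemma aux_coth_mono (p r : ℝ) (hp : 0 < p) (hpr : p ≤ r) :
    p * Real.cosh p * Real.sinh r ≤ r * Real.cosh r * Real.sinh p := by
  have key := aux_sinh_div (r + p) (r - p) (by linarith) (by linarith)
  have e1 : Real.sinh (r + p) = Real.sinh r * Real.cosh p + Real.cosh r * Real.sinh p :=
    Real.sinh_add r p
  have e2 : Real.sinh (r - p) = Real.sinh r * Real.cosh p - Real.cosh r * Real.sinh p :=
    Real.sinh_sub r p
  nlinarith [key]

-- L3: superadditivity of z^2 * coth z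
lemma aux_superadd (u q : ℝ) (hu : 0 < u) (hq : 0 < q) :
    u ^ 2 * (Real.cosh u / Real.sinh u) + q ^ 2 * (Real.cosh q / Real.sinh q) ≤
      (u + q) ^ 2 * (Real.cosh (u + q) / Real.sinh (u + q)) := by
  have hsu : 0 < Real.sinh u := Real.sinh_pos_iff.2 hu
  have hsq : 0 < Real.sinh q := Real.sinh_pos_iff.2 hq
  have hs : 0 < Real.sinh (u + q) := Real.sinh_pos_iff.2 (by linarith)
  have h1 : u * (Real.cosh u / Real.sinh u) ≤ (u + q) * (Real.cosh (u + q) / Real.sinh (u + q)) := by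
    rw [mul_div_assoc', mul_div_assoc', div_le_div_iff₀ hsu hs]
    exact aux_coth_mono u (u + q) hu (by linarith)
  have h2 : q * (Real.cosh q / Real.sinh q) ≤ (u + q) * (Real.cosh (u + q) / Real.sinh (u + q)) := by
    rw [mul_div_assoc', mul_div_assoc', div_le_div_iff₀ hsq hs]
    exact aux_coth_mono q (u + q) hq (by linarith)
  nlinarith [mul_le_mul_of_nonneg_left h1 hu.le, mul_le_mul_of_nonneg_left h2 hq.le]

-- conversion: ratio of exps to coth
lemma aux_frac (a b : ℝ) :
    (Real.exp (2 * a) + Real.exp (2 * b)) / (Real.exp (2 * a) - Real.exp (2 * b)) =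
      Real.cosh (a - b) / Real.sinh (a - b) := by
  have h1 : Real.exp (2 * a) = Real.exp (a + b) * Real.exp (a - b) := by
    rw [← Real.exp_add]; congr 1; ring
  have h2 : Real.exp (2 * b) = Real.exp (a + b) * Real.exp (-(a - b)) := by
    rw [← Real.exp_add]; congr 1; ring
  have e1 : Real.exp (2 * a) + Real.exp (2 * b) = 2 * Real.exp (a + b) * Real.cosh (a - b) := by
    rw [Real.cosh_eq, h1, h2]; ring
  have e2 : Real.exp (2 * a) - Real.exp (2 * b) = 2 * Real.exp (a + b) * Real.sinh (a - b) := by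
    rw [Real.sinh_eq, h1, h2]; ring
  rw [e1, e2, mul_div_mul_left _ _ (by positivity)]

lemma aux_frac1 (a : ℝ) :
    (Real.exp (2 * a) + 1) / (Real.exp (2 * a) - 1) = Real.cosh a / Real.sinh a := by
  simpa using aux_frac a 0

theorem ineq_lemma_II (t x : ℝ) (ht : 1 ≤ t) (hx : 1 < x) :
    (x + 1) / (x - 1) ≤
      (1 - t) ^ 2 * ((x + x ^ t) / (x - x ^ t)) + t ^ 2 * ((x ^ t + 1) / (x ^ t - 1)) := by
  rcases eq_or_lt_of_le ht with heq | hlt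
  · rw [← heq]; simp
  · have hx0 : (0:ℝ) < x := by linarith
    set s := Real.log x with hs
    have hs0 : 0 < s := Real.log_pos hx
    set a := s / 2 with ha
    set b := t * s / 2 with hb
    have ha0 : 0 < a := by positivity
    have hx1 : x = Real.exp (2 * a) := by
      rw [ha, show 2 * (s / 2) = s by ring, hs, Real.exp_log hx0]
    have hxt : x ^ t = Real.exp (2 * b) := by
      rw [Real.rpow_def_of_pos hx0, hb]; congr 1; ring
    rw [hxt, hx1, aux_frac1 a, aux_frac1 b, aux_frac a b]
    set u := b - a with hu
    have hu0 : 0 < u := by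
      rw [hu, hb, ha]; nlinarith
    have hab : a - b = -u := by rw [hu]; ring
    have hbua : b = u + a := by rw [hu]; ring
    rw [hab, Real.cosh_neg, Real.sinh_neg, div_neg, hbua]
    have key := aux_superadd u a hu0 ha0
    have htu : u = (t - 1) * a := by rw [hu, hb, ha]; ring
    refine le_of_mul_le_mul_left ?_ (show (0:ℝ) < a ^ 2 by positivity)
    have h3 : a ^ 2 * ((1 - t) ^ 2 * -(Real.cosh u / Real.sinh u) +
        t ^ 2 * (Real.cosh (u + a) / Real.sinh (u + a))) =
        -(u ^ 2 * (Real.cosh u / Real.sinh u)) +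
          (u + a) ^ 2 * (Real.cosh (u + a) / Real.sinh (u + a)) := by
      rw [htu]; ring
    rw [h3]
    linarith [key]
end

section
/- Define the generalized Kantorovich constant K(x,t) = (x^t - x)/((t-1)(x-1)) · ((t-1)/t · (x^t-1)/(x^t-x))^t for x > 0, x ≠ 1, and t ∉ {0,1}. Then for 0 < t < 1, the function x ↦ K(x,t) is monotone increasing on (0,1) and monotone decreasing on (1,∞). -/
/-- The generalized Kantorovich constant. -/
noncomputable def K (x t : ℝ) : ℝ :=
  ((x ^ t - x) / ((t - 1) * (x - 1))) * (((t - 1) / t) * ((x ^ t - 1) / (x ^ t - x))) ^ t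

namespace KAux

open Real Set

/-- The function `s ↦ s^t (1-s)^(1-t)` is monotone on `(0, t]`. -/
lemma g_mono {t p q : ℝ} (ht0 : 0 < t) (ht1 : t < 1) (hp : 0 < p) (hpq : p ≤ q) (hq : q ≤ t) :
    p ^ t * (1 - p) ^ (1 - t) ≤ q ^ t * (1 - q) ^ (1 - t) := by
  have hq0 : 0 < q := hp.trans_le hpq
  have hq1 : q < 1 := lt_of_le_of_lt hq ht1
  have hp1 : p < 1 := lt_of_le_of_lt hpq hq1
  have h1q : (0:ℝ) < 1 - q := by linarith
  have h1p : (0:ℝ) < 1 - p := by linarith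
  have hlin : t * (p / q) + (1 - t) * ((1 - p) / (1 - q)) ≤ 1 := by
    have h1 : t * (p / q) + (1 - t) * ((1 - p) / (1 - q))
        = (t * p * (1 - q) + (1 - t) * (1 - p) * q) / (q * (1 - q)) := by
      field_simp [hq0.ne', h1q.ne']
    rw [h1, div_le_one (mul_pos hq0 h1q)]
    nlinarith [mul_nonneg (sub_nonneg.2 hpq) (sub_nonneg.2 hq)]
  have key : (p / q) ^ t * ((1 - p) / (1 - q)) ^ (1 - t) ≤ 1 := by
    refine le_trans ?_ hlin
    exact Real.geom_mean_le_arith_mean2_weighted ht0.le (by linarith)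
      (div_nonneg hp.le hq0.le) (div_nonneg h1p.le h1q.le) (by ring)
  have e1 : p ^ t = (p / q) ^ t * q ^ t := by
    rw [Real.div_rpow hp.le hq0.le, div_mul_cancel₀]
    exact (Real.rpow_pos_of_pos hq0 t).ne'
  have e2 : (1 - p) ^ (1 - t) = ((1 - p) / (1 - q)) ^ (1 - t) * (1 - q) ^ (1 - t) := by
    rw [Real.div_rpow h1p.le h1q.le, div_mul_cancel₀]
    exact (Real.rpow_pos_of_pos h1q (1 - t)).ne'
  calc p ^ t * (1 - p) ^ (1 - t)
      = ((p / q) ^ t * ((1 - p) / (1 - q)) ^ (1 - t)) * (q ^ t * (1 - q) ^ (1 - t)) := by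
        rw [e1, e2]; ring
    _ ≤ 1 * (q ^ t * (1 - q) ^ (1 - t)) :=
        mul_le_mul_of_nonneg_right key
          (mul_nonneg (Real.rpow_nonneg hq0.le t) (Real.rpow_nonneg h1q.le (1 - t)))
    _ = q ^ t * (1 - q) ^ (1 - t) := one_mul _

/-- The function `s ↦ s^t (1-s)^(1-t)` is antitone on `[t, 1)`. -/
lemma g_anti {t p q : ℝ} (ht0 : 0 < t) (ht1 : t < 1) (hp : t ≤ p) (hpq : p ≤ q) (hq : q < 1) :
    q ^ t * (1 - q) ^ (1 - t) ≤ p ^ t * (1 - p) ^ (1 - t) := by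
  have hp0 : 0 < p := lt_of_lt_of_le ht0 hp
  have hq0 : 0 < q := hp0.trans_le hpq
  have hp1 : p < 1 := lt_of_le_of_lt hpq hq
  have h1q : (0:ℝ) < 1 - q := by linarith
  have h1p : (0:ℝ) < 1 - p := by linarith
  have hlin : t * (q / p) + (1 - t) * ((1 - q) / (1 - p)) ≤ 1 := by
    have h1 : t * (q / p) + (1 - t) * ((1 - q) / (1 - p))
        = (t * q * (1 - p) + (1 - t) * (1 - q) * p) / (p * (1 - p)) := by
      field_simp [hp0.ne', h1p.ne']
    rw [h1, div_le_one (mul_pos hp0 h1p)]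
    nlinarith [mul_nonneg (sub_nonneg.2 hpq) (sub_nonneg.2 hp)]
  have key : (q / p) ^ t * ((1 - q) / (1 - p)) ^ (1 - t) ≤ 1 := by
    refine le_trans ?_ hlin
    exact Real.geom_mean_le_arith_mean2_weighted ht0.le (by linarith)
      (div_nonneg hq0.le hp0.le) (div_nonneg h1q.le h1p.le) (by ring)
  have e1 : q ^ t = (q / p) ^ t * p ^ t := by
    rw [Real.div_rpow hq0.le hp0.le, div_mul_cancel₀]
    exact (Real.rpow_pos_of_pos hp0 t).ne'
  have e2 : (1 - q) ^ (1 - t) = ((1 - q) / (1 - p)) ^ (1 - t) * (1 - p) ^ (1 - t) := by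
    rw [Real.div_rpow h1q.le h1p.le, div_mul_cancel₀]
    exact (Real.rpow_pos_of_pos h1p (1 - t)).ne'
  calc q ^ t * (1 - q) ^ (1 - t)
      = ((q / p) ^ t * ((1 - q) / (1 - p)) ^ (1 - t)) * (p ^ t * (1 - p) ^ (1 - t)) := by
        rw [e1, e2]; ring
    _ ≤ 1 * (p ^ t * (1 - p) ^ (1 - t)) :=
        mul_le_mul_of_nonneg_right key
          (mul_nonneg (Real.rpow_nonneg hp0.le t) (Real.rpow_nonneg h1p.le (1 - t)))
    _ = p ^ t * (1 - p) ^ (1 - t) := one_mul _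

/-- Rewrite `K` in terms of the secant slope `a = (x^t - 1)/(x - 1)`. -/
lemma K_eq {t x : ℝ} (ht0 : 0 < t) (ht1 : t < 1) (hx1 : x ≠ 1)
    (ha0 : 0 < (x ^ t - 1) / (x - 1)) (ha1 : (x ^ t - 1) / (x - 1) < 1) :
    K x t = (((1 - t) / t) ^ t / (1 - t)) * ((x ^ t - 1) / (x - 1)) ^ t
      * (1 - (x ^ t - 1) / (x - 1)) ^ (1 - t) := by
  set a := (x ^ t - 1) / (x - 1) with ha_def
  set b := 1 - a with hb_def
  have hx1' : x - 1 ≠ 0 := sub_ne_zero.2 hx1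
  have hb0 : 0 < b := by simp only [hb_def]; linarith
  have h1t : (0:ℝ) < 1 - t := by linarith
  have ht1' : t - 1 ≠ 0 := by intro h; exact absurd (by linarith [sub_eq_zero.1 h]) ht1.not_ge
  have hxt1 : x ^ t - 1 = a * (x - 1) := by
    rw [ha_def, div_mul_cancel₀ _ hx1']
  have hxtx : x ^ t - x = -(b * (x - 1)) := by
    have h : b * (x - 1) = (x - 1) - (x ^ t - 1) := by rw [hb_def, hxt1]; ring
    rw [h]; ring
  have hxtx0 : x ^ t - x ≠ 0 := by
    rw [hxtx]
    exact neg_ne_zero.2 (mul_ne_zero (ne_of_gt hb0) hx1')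
  have f1 : (x ^ t - x) / ((t - 1) * (x - 1)) = b / (1 - t) := by
    rw [hxtx]
    field_simp [hx1', ht1']
    ring
  have f2 : ((t - 1) / t) * ((x ^ t - 1) / (x ^ t - x)) = ((1 - t) / t) * (a / b) := by
    rw [hxtx, hxt1]
    field_simp [hx1', ht0.ne', hb0.ne']
    ring
  have f3 : (((1 - t) / t) * (a / b)) ^ t = ((1 - t) / t) ^ t * (a ^ t / b ^ t) := by
    rw [Real.mul_rpow (by positivity) (div_nonneg ha0.le hb0.le),
      Real.div_rpow ha0.le hb0.le]
  have hbt : b ^ (1 - t) = b / b ^ t := by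
    rw [Real.rpow_sub hb0, Real.rpow_one]
  have hbt0 : b ^ t ≠ 0 := ne_of_gt (Real.rpow_pos_of_pos hb0 t)
  rw [K, f1, f2, f3, hbt]
  field_simp

end KAux

theorem K_monotone_of_t_in_01 (t : ℝ) (ht0 : 0 < t) (ht1 : t < 1) :
    MonotoneOn (fun x => K x t) (Set.Ioo (0 : ℝ) 1) ∧
      AntitoneOn (fun x => K x t) (Set.Ioi (1 : ℝ)) := by
  classical
  set a : ℝ → ℝ := fun x => (x ^ t - 1) / (x - 1) with ha_def
  have hconc : ConvexOn ℝ (Set.Ici (0:ℝ)) (-fun x : ℝ => x ^ t) :=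
    (Real.concaveOn_rpow ht0.le ht1.le).neg
  -- the slope is antitone
  have ha_anti : ∀ x y : ℝ, 0 ≤ x → 0 ≤ y → x ≠ 1 → y ≠ 1 → x ≤ y → a y ≤ a x := by
    intro x y hx hy hx1 hy1 hxy
    have h := hconc.secant_mono (a := 1) (x := x) (y := y)
      (Set.mem_Ici.2 zero_le_one) (Set.mem_Ici.2 hx) (Set.mem_Ici.2 hy) hx1 hy1 hxy
    simp only [Pi.neg_apply, Real.one_rpow] at h
    have e : ∀ z : ℝ, (-(z ^ t) - -1) / (z - 1) = -((z ^ t - 1) / (z - 1)) := by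
      intro z; ring
    rw [e, e] at h
    simp only [ha_def]
    linarith
  -- Bernoulli: x^t ≤ 1 + t (x - 1) for x ≥ 0
  have hbern : ∀ x : ℝ, 0 ≤ x → x ^ t ≤ 1 + t * (x - 1) := by
    intro x hx
    have := rpow_one_add_le_one_add_mul_self (s := x - 1) (by linarith) ht0.le ht1.le
    simpa using this
  have h1t : (0:ℝ) < 1 - t := by linarith
  have hC : 0 < ((1 - t) / t) ^ t / (1 - t) :=
    div_pos (Real.rpow_pos_of_pos (div_pos h1t ht0) t) h1t
  constructor
  · -- monotone on (0,1)
    intro x hx y hy hxy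
    obtain ⟨hx0, hx1⟩ := hx
    obtain ⟨hy0, hy1⟩ := hy
    have hbound : ∀ z : ℝ, 0 < z → z < 1 → t ≤ a z ∧ a z < 1 := by
      intro z hz0 hz1
      have hz1' : z - 1 < 0 := by linarith
      constructor
      · simp only [ha_def]
        rw [le_div_iff_of_neg hz1']
        have := hbern z hz0.le
        linarith
      · simp only [ha_def]
        rw [div_lt_iff_of_neg hz1']
        have h := Real.rpow_lt_rpow_of_exponent_gt hz0 hz1 ht1
        rw [Real.rpow_one] at h
        linarith
    obtain ⟨hax_t, hax_1⟩ := hbound x hx0 hx1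
    obtain ⟨hay_t, hay_1⟩ := hbound y hy0 hy1
    have hanti := ha_anti x y hx0.le hy0.le (ne_of_lt hx1) (ne_of_lt hy1) hxy
    have hax0 : 0 < a x := lt_of_lt_of_le ht0 hax_t
    have hay0 : 0 < a y := lt_of_lt_of_le ht0 hay_t
    have hKx := KAux.K_eq ht0 ht1 (ne_of_lt hx1) hax0 hax_1
    have hKy := KAux.K_eq ht0 ht1 (ne_of_lt hy1) hay0 hay_1
    simp only
    rw [hKx, hKy]
    have hg : (a x) ^ t * (1 - a x) ^ (1 - t) ≤ (a y) ^ t * (1 - a y) ^ (1 - t) :=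
      KAux.g_anti ht0 ht1 hay_t hanti hax_1
    calc ((1 - t) / t) ^ t / (1 - t) * (a x) ^ t * (1 - a x) ^ (1 - t)
        = ((1 - t) / t) ^ t / (1 - t) * ((a x) ^ t * (1 - a x) ^ (1 - t)) := by ring
      _ ≤ ((1 - t) / t) ^ t / (1 - t) * ((a y) ^ t * (1 - a y) ^ (1 - t)) :=
          mul_le_mul_of_nonneg_left hg hC.le
      _ = ((1 - t) / t) ^ t / (1 - t) * (a y) ^ t * (1 - a y) ^ (1 - t) := by ring
  · -- antitone on (1,∞)
    intro x hx y hy hxy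
    have hx1 : (1:ℝ) < x := hx
    have hy1 : (1:ℝ) < y := hy
    have hbound : ∀ z : ℝ, 1 < z → 0 < a z ∧ a z ≤ t := by
      intro z hz1
      have hz0 : (0:ℝ) < z := lt_trans one_pos hz1
      have hz1' : (0:ℝ) < z - 1 := by linarith
      constructor
      · apply div_pos _ hz1'
        have : (1:ℝ) < z ^ t := (Real.one_lt_rpow_iff_of_pos hz0).2 (Or.inl ⟨hz1, ht0⟩)
        linarith
      · simp only [ha_def]
        rw [div_le_iff₀ hz1']
        have := hbern z hz0.le
        linarith
    obtain ⟨hax0, hax_t⟩ := hbound x hx1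
    obtain ⟨hay0, hay_t⟩ := hbound y hy1
    have hanti := ha_anti x y (by linarith) (by linarith)
      (ne_of_gt hx1) (ne_of_gt hy1) hxy
    have hax1 : a x < 1 := lt_of_le_of_lt hax_t ht1
    have hay1 : a y < 1 := lt_of_le_of_lt hay_t ht1
    have hKx := KAux.K_eq ht0 ht1 (ne_of_gt hx1) hax0 hax1
    have hKy := KAux.K_eq ht0 ht1 (ne_of_gt hy1) hay0 hay1
    simp only
    rw [hKx, hKy]
    have hg : (a y) ^ t * (1 - a y) ^ (1 - t) ≤ (a x) ^ t * (1 - a x) ^ (1 - t) :=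
      KAux.g_mono ht0 ht1 hay0 hanti hax_t
    calc ((1 - t) / t) ^ t / (1 - t) * (a y) ^ t * (1 - a y) ^ (1 - t)
        = ((1 - t) / t) ^ t / (1 - t) * ((a y) ^ t * (1 - a y) ^ (1 - t)) := by ring
      _ ≤ ((1 - t) / t) ^ t / (1 - t) * ((a x) ^ t * (1 - a x) ^ (1 - t)) :=
          mul_le_mul_of_nonneg_left hg hC.le
      _ = ((1 - t) / t) ^ t / (1 - t) * (a x) ^ t * (1 - a x) ^ (1 - t) := by ring
end

section
/- Define K(x,t) = (x^t - x)/((t-1)(x-1)) · ((t-1)/t · (x^t-1)/(x^t-x))^t. Then for t > 1, the function x ↦ K(x,t) is monotone decreasing on (0,1) and monotone increasing on (1,∞), and K(x,t) ≥ 1 for all x > 0, x ≠ 1. -/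
open Set

noncomputable def kantorovichArgmax (t a : ℝ) : ℝ :=
  t * (a - 1) / (a * (t - 1))

noncomputable def kantorovichOfSlope (t a : ℝ) : ℝ :=
  (a - 1) / (t - 1) * ((t - 1) / t * (a / (a - 1))) ^ t

theorem K_eq_kantorovichOfSlope {x : ℝ} (t : ℝ) (hx : x ≠ 1) :
    K x t = kantorovichOfSlope t (slope (· ^ t) 1 x) := by
  have hx' : x - 1 ≠ 0 := sub_ne_zero.mpr hx
  have hsub : slope (· ^ t) 1 x - 1 = (x ^ t - x) / (x - 1) := by
    rw [slope_def_field, Real.one_rpow]; field_simp; ring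
  rw [kantorovichOfSlope, hsub, slope_def_field, Real.one_rpow, div_div_div_cancel_right₀ hx',
    div_div, mul_comm (x - 1), K]

section SlopeOfRpow

variable {t x : ℝ}

theorem one_lt_slope_rpow (ht : 1 < t) (hx : 0 < x) (hx1 : x ≠ 1) :
    (1 : ℝ) < slope (· ^ t) 1 x := by
  rw [slope_def_field, Real.one_rpow]
  rcases hx1.lt_or_gt with hlt | hgt
  · have : x ^ t < x := by
      simpa using Real.rpow_lt_rpow_of_exponent_gt hx hlt ht
    rw [lt_div_iff_of_neg (by linarith)]; linarith
  · have : x < x ^ t := by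
      simpa using Real.rpow_lt_rpow_of_exponent_lt hgt ht
    rw [lt_div_iff₀ (by linarith)]; linarith

theorem slope_rpow_le_of_lt_one (ht : 1 ≤ t) (hx : 0 ≤ x) (hx1 : x < 1) :
    slope (· ^ t) 1 x ≤ t := by
  have bernoulli := one_add_mul_self_le_rpow_one_add (by linarith : -1 ≤ x - 1) ht
  rw [slope_def_field, Real.one_rpow, div_le_iff_of_neg (by linarith)]
  simp only [add_sub_cancel] at bernoulli
  linarith

theorem le_slope_rpow_of_one_lt (ht : 1 ≤ t) (hx1 : 1 < x) :
    t ≤ slope (· ^ t) 1 x := by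
  have bernoulli := one_add_mul_self_le_rpow_one_add (by linarith : -1 ≤ x - 1) ht
  rw [slope_def_field, Real.one_rpow, le_div_iff₀ (by linarith)]
  simp only [add_sub_cancel] at bernoulli
  linarith

end SlopeOfRpow

section KantorovichOfSlope

variable {t a b s : ℝ}

theorem kantorovichArgmax_pos (ht : 1 < t) (ha : 1 < a) : 0 < kantorovichArgmax t a := by
  have : 0 < t - 1 := by linarith
  have : 0 < a - 1 := by linarith
  rw [kantorovichArgmax]
  positivity

theorem kantorovichArgmax_sub_one (ht : 1 < t) (ha : 1 < a) :
    kantorovichArgmax t a - 1 = (a - t) / (a * (t - 1)) := by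
  have : t - 1 ≠ 0 := by linarith
  have : a ≠ 0 := by linarith
  rw [kantorovichArgmax]
  field_simp
  ring

theorem kantorovichOfSlope_eq_div (ht : 1 < t) (ha : 1 < a) :
    kantorovichOfSlope t a = (a - 1) / (t - 1) / kantorovichArgmax t a ^ t := by
  have : t - 1 ≠ 0 := by linarith
  have : a - 1 ≠ 0 := by linarith
  have hinv : (t - 1) / t * (a / (a - 1)) = (kantorovichArgmax t a)⁻¹ := by
    rw [kantorovichArgmax]
    field_simp
  rw [kantorovichOfSlope, hinv, Real.inv_rpow (kantorovichArgmax_pos ht ha).le, ← div_eq_mul_inv]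

theorem kantorovichOfSlope_mul_rpow_argmax (ht : 1 < t) (ha : 1 < a) :
    kantorovichOfSlope t a * kantorovichArgmax t a ^ t = 1 + a * (kantorovichArgmax t a - 1) := by
  have hpow := Real.rpow_pos_of_pos (kantorovichArgmax_pos ht ha) t
  have : t - 1 ≠ 0 := by linarith
  have : a ≠ 0 := by linarith
  rw [kantorovichOfSlope_eq_div ht ha, div_mul_cancel₀ _ hpow.ne', kantorovichArgmax]
  field_simp
  ring

theorem one_add_mul_sub_one_le_kantorovichOfSlope_mul_rpow (ht : 1 < t) (ha : 1 < a)
    (hs : 0 ≤ s) : 1 + a * (s - 1) ≤ kantorovichOfSlope t a * s ^ t := by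
  have hs₀ := kantorovichArgmax_pos ht ha
  set s₀ := kantorovichArgmax t a with hs₀_def
  have : t - 1 ≠ 0 := by linarith
  have : a ≠ 0 := by linarith
  have : a - 1 ≠ 0 := by linarith
  have hc : 0 ≤ (a - 1) / (t - 1) := div_nonneg (by linarith) (by linarith)
  have bernoulli : 1 + t * (s / s₀ - 1) ≤ (s / s₀) ^ t := by
    simpa using one_add_mul_self_le_rpow_one_add
      (by linarith [div_nonneg hs hs₀.le] : -1 ≤ s / s₀ - 1) ht.le
  calc 1 + a * (s - 1) = (a - 1) / (t - 1) * (1 + t * (s / s₀ - 1)) := by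
        rw [hs₀_def, kantorovichArgmax]; field_simp; ring
    _ ≤ (a - 1) / (t - 1) * (s / s₀) ^ t := mul_le_mul_of_nonneg_left bernoulli hc
    _ = kantorovichOfSlope t a * s ^ t := by
        rw [kantorovichOfSlope_eq_div ht ha, Real.div_rpow hs hs₀.le]; ring

theorem kantorovichOfSlope_le_of_mul_argmax_le (ht : 1 < t) (ha : 1 < a) (hb : 1 < b)
    (h : a * (kantorovichArgmax t a - 1) ≤ b * (kantorovichArgmax t a - 1)) :
    kantorovichOfSlope t a ≤ kantorovichOfSlope t b := by
  have hs := kantorovichArgmax_pos ht ha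
  set s := kantorovichArgmax t a
  refine le_of_mul_le_mul_right ?_ (Real.rpow_pos_of_pos hs t)
  calc kantorovichOfSlope t a * s ^ t = 1 + a * (s - 1) :=
        kantorovichOfSlope_mul_rpow_argmax ht ha
    _ ≤ 1 + b * (s - 1) := by linarith
    _ ≤ kantorovichOfSlope t b * s ^ t :=
        one_add_mul_sub_one_le_kantorovichOfSlope_mul_rpow ht hb hs.le

theorem kantorovichOfSlope_antitoneOn (ht : 1 < t) :
    AntitoneOn (kantorovichOfSlope t) (Ioc 1 t) := by
  intro a ha b hb hab
  refine kantorovichOfSlope_le_of_mul_argmax_le ht hb.1 ha.1 ?_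
  have : (b - t) / (b * (t - 1)) ≤ 0 :=
    div_nonpos_of_nonpos_of_nonneg (by linarith [hb.2]) (by nlinarith [hb.1])
  rw [kantorovichArgmax_sub_one ht hb.1]
  exact mul_le_mul_of_nonpos_right hab this

theorem kantorovichOfSlope_monotoneOn (ht : 1 < t) :
    MonotoneOn (kantorovichOfSlope t) (Ici t) := by
  intro a ha b hb hab
  have ha1 : 1 < a := lt_of_lt_of_le ht ha
  refine kantorovichOfSlope_le_of_mul_argmax_le ht ha1 (by linarith) ?_
  have : 0 ≤ (a - t) / (a * (t - 1)) :=
    div_nonneg (by linarith [mem_Ici.mp ha]) (by nlinarith)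
  rw [kantorovichArgmax_sub_one ht ha1]
  exact mul_le_mul_of_nonneg_right hab this

theorem one_le_kantorovichOfSlope (ht : 1 < t) (ha : 1 < a) : 1 ≤ kantorovichOfSlope t a := by
  simpa using one_add_mul_sub_one_le_kantorovichOfSlope_mul_rpow ht ha zero_le_one

end KantorovichOfSlope

theorem K_monotone_of_one_lt_t (t : ℝ) (ht : 1 < t) :
    AntitoneOn (fun x => K x t) (Set.Ioo (0 : ℝ) 1) ∧
      MonotoneOn (fun x => K x t) (Set.Ioi (1 : ℝ)) ∧
      ∀ x : ℝ, 0 < x → x ≠ 1 → 1 ≤ K x t := by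
  have slope_mono := (convexOn_rpow ht.le).slope_mono (mem_Ici.mpr zero_le_one)
  refine ⟨?_, ?_, ?_⟩
  · intro x ⟨hx0, hx1⟩ y ⟨hy0, hy1⟩ hxy
    simp only [K_eq_kantorovichOfSlope t hx1.ne, K_eq_kantorovichOfSlope t hy1.ne]
    exact kantorovichOfSlope_antitoneOn ht
      ⟨one_lt_slope_rpow ht hx0 hx1.ne, slope_rpow_le_of_lt_one ht.le hx0.le hx1⟩
      ⟨one_lt_slope_rpow ht hy0 hy1.ne, slope_rpow_le_of_lt_one ht.le hy0.le hy1⟩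
      (slope_mono ⟨hx0.le, hx1.ne⟩ ⟨hy0.le, hy1.ne⟩ hxy)
  · rintro x (hx : 1 < x) y (hy : 1 < y) hxy
    simp only [K_eq_kantorovichOfSlope t hx.ne', K_eq_kantorovichOfSlope t hy.ne']
    exact kantorovichOfSlope_monotoneOn ht (le_slope_rpow_of_one_lt ht.le hx)
      (le_slope_rpow_of_one_lt ht.le hy)
      (slope_mono ⟨(zero_lt_one.trans hx).le, hx.ne'⟩ ⟨(zero_lt_one.trans hy).le, hy.ne'⟩ hxy)
  · intro x hx0 hx1
    rw [K_eq_kantorovichOfSlope t hx1]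
    exact one_le_kantorovichOfSlope ht (one_lt_slope_rpow ht hx0 hx1)
end

section
/- The generalized Kantorovich constant satisfies the symmetry K(1/x, t) = K(x, t) for all x > 0, x ≠ 1, and all real t ∉ {0,1}. -/
namespace Real

theorem mul_rpow_of_nonneg_left {a : ℝ} (ha : 0 ≤ a) (b z : ℝ) :
    (a * b) ^ z = a ^ z * b ^ z := by
  rcases le_or_gt 0 b with hb | hb
  · exact mul_rpow ha hb
  rcases ha.eq_or_lt with rfl | ha
  · rcases eq_or_ne z 0 with rfl | hz
    · simp
    · simp [zero_rpow hz]
  rw [rpow_def_of_neg (mul_neg_of_pos_of_neg ha hb), rpow_def_of_neg hb, rpow_def_of_pos ha,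
    log_mul ha.ne' hb.ne, add_mul, exp_add, mul_assoc]

end Real

section Inversion

variable {F : Type*} [Field F] {x y : F}

theorem mul_inv_sub_one_div_inv_sub_inv (hx : x ≠ 0) (hy : y ≠ 0) (c : F) :
    c * ((y⁻¹ - 1) / (y⁻¹ - x⁻¹)) = x * (c * ((y - 1) / (y - x))) := by
  rw [inv_sub_inv hy hx, ← neg_sub y x]
  field_simp
  ring

theorem inv_sub_inv_div_mul_inv_sub_one (hx : x ≠ 0) (hy : y ≠ 0) (c : F) :
    (y⁻¹ - x⁻¹) / (c * (x⁻¹ - 1)) = (y - x) / (c * (x - 1)) / y := by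
  have hx' : x⁻¹ - 1 = -(x - 1) / x := by field_simp; ring
  rw [inv_sub_inv hy hx, ← neg_sub y x, hx']
  field_simp

end Inversion

theorem K_inv_symm_general (x t : ℝ) (hx : 0 < x) :
    K (1 / x) t = K x t := by
  have hy : x ^ t ≠ 0 := (Real.rpow_pos_of_pos hx t).ne'
  simp only [K, one_div, Real.inv_rpow hx.le]
  rw [mul_inv_sub_one_div_inv_sub_inv hx.ne' hy, Real.mul_rpow_of_nonneg_left hx.le,
    inv_sub_inv_div_mul_inv_sub_one hx.ne' hy]
  field_simp

theorem K_inv_symm (x t : ℝ) (hx : 0 < x) (hx1 : x ≠ 1) (ht0 : t ≠ 0) (ht1 : t ≠ 1) :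
    K (1 / x) t = K x t :=
  K_inv_symm_general x t hx
end

section
/- The generalized Kantorovich constant satisfies K(x, 1-t) = K(x, t) for all x > 0, x ≠ 1, and all real t ∉ {0,1}. -/
lemma K_aux (x s : ℝ) (hx : 0 < x) (hx1 : x ≠ 1) (hs : s ≠ 0) :
    0 < (x ^ s - 1) * ((x - 1) * s) := by
  rcases lt_or_gt_of_ne hx1 with h | h <;> rcases lt_or_gt_of_ne hs with h2 | h2
  · have h3 : 1 < x ^ s := (Real.one_lt_rpow_iff_of_pos hx).2 (Or.inr ⟨h, h2⟩)
    exact mul_pos (by linarith) (mul_pos_of_neg_of_neg (by linarith) h2)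
  · have h3 : x ^ s < 1 := (Real.rpow_lt_one_iff_of_pos hx).2 (Or.inr ⟨h, h2⟩)
    exact mul_pos_of_neg_of_neg (by linarith) (mul_neg_of_neg_of_pos (by linarith) h2)
  · have h3 : x ^ s < 1 := (Real.rpow_lt_one_iff_of_pos hx).2 (Or.inl ⟨h, h2⟩)
    exact mul_pos_of_neg_of_neg (by linarith) (mul_neg_of_pos_of_neg (by linarith) h2)
  · have h3 : 1 < x ^ s := (Real.one_lt_rpow_iff_of_pos hx).2 (Or.inl ⟨h, h2⟩)
    exact mul_pos (by linarith) (mul_pos (by linarith) h2)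

theorem K_one_sub_symm (x t : ℝ) (hx : 0 < x) (hx1 : x ≠ 1) (ht0 : t ≠ 0) (ht1 : t ≠ 1) :
    K x (1 - t) = K x t := by
  have ha : 0 < x ^ t := Real.rpow_pos_of_pos hx t
  have hxne : x ≠ 0 := ne_of_gt hx
  have hx1' : x - 1 ≠ 0 := sub_ne_zero.2 hx1
  have ht1' : t - 1 ≠ 0 := sub_ne_zero.2 ht1
  have h1t : (1:ℝ) - t ≠ 0 := sub_ne_zero.2 (Ne.symm ht1)
  have P1 : 0 < (x ^ t - 1) * ((x - 1) * t) := K_aux x t hx hx1 ht0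
  have hxt1 : x ^ (t - 1) = x ^ t / x := by
    rw [Real.rpow_sub hx, Real.rpow_one]
  have P2 : 0 < (x ^ t / x - 1) * ((x - 1) * (t - 1)) := by
    have := K_aux x (t - 1) hx hx1 ht1'
    rwa [hxt1] at this
  have ha1 : x ^ t ≠ 1 := by
    intro h; rw [h] at P1; simp at P1
  have hax : x ^ t ≠ x := by
    intro h; rw [h, div_self hxne] at P2; simp at P2
  have hax' : x ^ t - x ≠ 0 := sub_ne_zero.2 hax
  have ha1' : x ^ t - 1 ≠ 0 := sub_ne_zero.2 ha1
  have P2' : 0 < (x ^ t - x) * ((x - 1) * (t - 1)) := by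
    have h : (x ^ t - x) * ((x - 1) * (t - 1))
        = ((x ^ t / x - 1) * ((x - 1) * (t - 1))) * x := by
      field_simp
    rw [h]; exact mul_pos P2 hx
  have hs : 0 < (x - 1) ^ 2 := by positivity
  have hnd : 0 < ((t - 1) * (x ^ t - 1)) * (t * (x ^ t - x)) := by
    nlinarith [mul_pos P1 P2']
  have hB : 0 < (t - 1) / t * ((x ^ t - 1) / (x ^ t - x)) := by
    rw [div_mul_div_comm]
    rcases mul_pos_iff.1 hnd with ⟨h1, h2⟩ | ⟨h1, h2⟩
    · exact div_pos h1 h2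
    · exact div_pos_of_neg_of_neg h1 h2
  set B : ℝ := (t - 1) / t * ((x ^ t - 1) / (x ^ t - x)) with hBdef
  have hxB : 0 < x * B := mul_pos hx hB
  have hb : x ^ (1 - t) = x / x ^ t := by
    rw [Real.rpow_sub hx, Real.rpow_one]
  have hxa : x - x ^ t ≠ 0 := sub_ne_zero.2 (Ne.symm hax)
  have h1a : 1 - x ^ t ≠ 0 := sub_ne_zero.2 (Ne.symm ha1)
  have hbase : (1 - t - 1) / (1 - t) * ((x ^ (1 - t) - 1) / (x ^ (1 - t) - x))
      = (x * B)⁻¹ := by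
    refine eq_inv_of_mul_eq_one_left ?_
    rw [hb, hBdef]
    have e1 : x / x ^ t - 1 = (x - x ^ t) / x ^ t := by field_simp
    have e2 : x / x ^ t - x = x * (1 - x ^ t) / x ^ t := by field_simp
    rw [e1, e2]
    field_simp
    ring
  have h7 : ((x * B)⁻¹) ^ (1 - t) = (x * B) ^ (t - 1) := by
    rw [Real.inv_rpow hxB.le, ← Real.rpow_neg hxB.le]
    congr 1
    ring
  have h8 : (x * B) ^ (t - 1) = (x ^ t / x) * B ^ (t - 1) := by
    rw [Real.mul_rpow hx.le hB.le, hxt1]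
  have h9 : B ^ (1 + (t - 1)) = B ^ (1 : ℝ) * B ^ (t - 1) := Real.rpow_add hB 1 (t - 1)
  rw [show (1:ℝ) + (t - 1) = t by ring, Real.rpow_one] at h9
  rw [K, K, hbase, hb, h7, h8, ← hBdef, h9]
  rw [show (1:ℝ) - t - 1 = -t by ring]
  set C : ℝ := B ^ (t - 1) with hC
  rw [hBdef]
  field_simp
  ring
end

section
/- Define L(x,t) = ((x^t + x)/(x+1)) · ((x^t + 1)/(x^t + x))^t and K(x,t) = (x^t - x)/((t-1)(x-1)) · ((t-1)/t · (x^t-1)/(x^t-x))^t. Then for all 0 < t < 1 and all x > 0 with x ≠ 1, L(x,t) ≤ K(x,t). -/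
/-- A lower bound function for the generalized Kantorovich constant. -/
noncomputable def L (x t : ℝ) : ℝ :=
  ((x ^ t + x) / (x + 1)) * ((x ^ t + 1) / (x ^ t + x)) ^ t

open Real

lemma convexOn_sinh' : ConvexOn ℝ (Set.Ici 0) Real.sinh := by
  apply convexOn_of_deriv2_nonneg (convex_Ici 0) Real.continuous_sinh.continuousOn
  · exact Real.differentiable_sinh.differentiableOn
  · rw [Real.deriv_sinh]; exact Real.differentiable_cosh.differentiableOn
  · intro x hx
    rw [show (deriv^[2] Real.sinh) = deriv (deriv Real.sinh) from rfl, Real.deriv_sinh,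
      Real.deriv_cosh]
    rw [interior_Ici] at hx
    exact Real.sinh_nonneg_iff.2 (le_of_lt hx)

lemma sinh_ratio {p q : ℝ} (hp : 0 ≤ p) (hpq : p ≤ q) : q * Real.sinh p ≤ p * Real.sinh q := by
  rcases eq_or_lt_of_le (hp.trans hpq) with h | hq
  · have : p = 0 := le_antisymm (hpq.trans h.symm.le) hp
    simp [this, ← h]
  · have hpq' : p / q ≤ 1 := div_le_one_of_le₀ hpq hq.le
    have h1 := convexOn_sinh'.2 (Set.mem_Ici.2 (hp.trans hpq)) (Set.mem_Ici.2 le_rfl)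
      (div_nonneg hp hq.le) (by linarith : (0:ℝ) ≤ 1 - p/q) (by ring)
    rw [smul_eq_mul, smul_eq_mul, smul_eq_mul, smul_eq_mul, mul_zero, add_zero,
      Real.sinh_zero, mul_zero, add_zero, div_mul_cancel₀ _ hq.ne'] at h1
    calc q * Real.sinh p ≤ q * (p / q * Real.sinh q) := by
          exact mul_le_mul_of_nonneg_left h1 hq.le
      _ = p * Real.sinh q := by field_simp

lemma phi_mono {u v : ℝ} (hu : 0 < u) (huv : u ≤ v) :
    u * Real.cosh u * Real.sinh v ≤ v * Real.cosh v * Real.sinh u := by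
  have hs := sinh_ratio (p := v - u) (q := u + v) (by linarith) (by linarith)
  have e1 : Real.sinh (u + v) = Real.sinh u * Real.cosh v + Real.cosh u * Real.sinh v :=
    Real.sinh_add u v
  have e2 : Real.sinh (v - u) = Real.sinh v * Real.cosh u - Real.cosh v * Real.sinh u :=
    Real.sinh_sub v u
  nlinarith [hs, e1, e2]

lemma key_superadd {a b : ℝ} (ha : 0 < a) (hb : 0 < b) :
    a^2 * (Real.cosh a / Real.sinh a) + b^2 * (Real.cosh b / Real.sinh b)
      ≤ (a+b)^2 * (Real.cosh (a+b) / Real.sinh (a+b)) := by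
  have hsa : 0 < Real.sinh a := Real.sinh_pos_iff.2 ha
  have hsb : 0 < Real.sinh b := Real.sinh_pos_iff.2 hb
  have hsab : 0 < Real.sinh (a+b) := Real.sinh_pos_iff.2 (by linarith)
  have h1 : a^2 * (Real.cosh a / Real.sinh a) ≤ a * (a+b) * (Real.cosh (a+b) / Real.sinh (a+b)) := by
    have h := phi_mono ha (by linarith : a ≤ a + b)
    rw [mul_div_assoc', mul_div_assoc', div_le_div_iff₀ hsa hsab]
    nlinarith [h]
  have h2 : b^2 * (Real.cosh b / Real.sinh b) ≤ b * (a+b) * (Real.cosh (a+b) / Real.sinh (a+b)) := by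
    have h := phi_mono hb (by linarith : b ≤ a + b)
    rw [mul_div_assoc', mul_div_assoc', div_le_div_iff₀ hsb hsab]
    nlinarith [h]
  calc a^2 * (Real.cosh a / Real.sinh a) + b^2 * (Real.cosh b / Real.sinh b)
      ≤ a * (a+b) * (Real.cosh (a+b) / Real.sinh (a+b)) + b * (a+b) * (Real.cosh (a+b) / Real.sinh (a+b)) := add_le_add h1 h2
    _ = (a+b)^2 * (Real.cosh (a+b) / Real.sinh (a+b)) := by ring

lemma coth_ineq {s t : ℝ} (hs : 0 < s) (ht0 : 0 < t) (ht1 : t < 1) :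
    t^2 * (Real.cosh (t*s) / Real.sinh (t*s)) + (1-t)^2 * (Real.cosh ((1-t)*s) / Real.sinh ((1-t)*s))
      ≤ Real.cosh s / Real.sinh s := by
  have h1t : 0 < 1 - t := by linarith
  have key := key_superadd (mul_pos ht0 hs) (mul_pos h1t hs)
  rw [show t*s + (1-t)*s = s by ring] at key
  have hs2 : (0:ℝ) < s^2 := by positivity
  rw [show (t*s)^2 = t^2 * s^2 by ring, show ((1-t)*s)^2 = (1-t)^2 * s^2 by ring] at key
  nlinarith [key]

lemma coth_sq {A : ℝ} (hA : 1 < A) : (A+A⁻¹)/(A-A⁻¹) = (A^2+1)/(A^2-1) := by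
  have hA0 : A ≠ 0 := by positivity
  have h1 : A^2 - 1 ≠ 0 := by nlinarith
  have h4 : A - A⁻¹ ≠ 0 := by
    have : A⁻¹ < 1 := by rw [inv_lt_one_iff₀]; right; exact hA
    nlinarith
  have e1 : A*(A+A⁻¹) = A^2+1 := by field_simp
  have e2 : A*(A-A⁻¹) = A^2-1 := by field_simp
  rw [← mul_div_mul_left (A+A⁻¹) (A-A⁻¹) hA0, e1, e2]

lemma star_core {A B t : ℝ} (hA : 1 < A) (hB : 1 < B)
    (hco : t^2 * ((A+A⁻¹)/(A-A⁻¹)) + (1-t)^2 * ((B+B⁻¹)/(B-B⁻¹))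
      ≤ ((A*B)+(A*B)⁻¹)/((A*B)-(A*B)⁻¹)) (ht0 : 0 < t) (ht1 : t < 1) :
    t * (t * ((A^2+1)/((A*B)^2+1)) / ((A^2-1)/((A*B)^2-1)))
      + (1-t) * ((1-t) * ((A^2+(A*B)^2)/((A*B)^2+1)) / (((A*B)^2-A^2)/((A*B)^2-1))) ≤ 1 := by
  have hA0 : (0:ℝ) < A := by linarith
  have hB0 : (0:ℝ) < B := by linarith
  have hAB : 1 < A*B := by nlinarith
  have h1 : A^2 - 1 ≠ 0 := by nlinarith
  have h1B : B^2 - 1 ≠ 0 := by nlinarith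
  have h2 : (A*B)^2 - 1 ≠ 0 := by nlinarith
  have h2' : (0:ℝ) < (A*B)^2 - 1 := by nlinarith
  have h2'' : (0:ℝ) < (A*B)^2 + 1 := by positivity
  rw [coth_sq hA, coth_sq hB, coth_sq hAB] at hco
  have eq1 : t * (t * ((A^2+1)/((A*B)^2+1)) / ((A^2-1)/((A*B)^2-1)))
      = t^2 * ((A^2+1)/(A^2-1)) * (((A*B)^2-1)/((A*B)^2+1)) := by
    field_simp
  have eq2 : (1-t) * ((1-t) * ((A^2+(A*B)^2)/((A*B)^2+1)) / (((A*B)^2-A^2)/((A*B)^2-1)))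
      = (1-t)^2 * ((B^2+1)/(B^2-1)) * (((A*B)^2-1)/((A*B)^2+1)) := by
    have h3 : (A*B)^2 - A^2 ≠ 0 := by
      have e : (A*B)^2 - A^2 = A^2*(B^2-1) := by ring
      rw [e]
      have : 0 < B^2 - 1 := by nlinarith
      positivity
    field_simp
    ring
  rw [eq1, eq2, ← add_mul]
  calc (t^2 * ((A^2+1)/(A^2-1)) + (1-t)^2 * ((B^2+1)/(B^2-1))) * (((A*B)^2-1)/((A*B)^2+1))
      ≤ (((A*B)^2+1)/((A*B)^2-1)) * (((A*B)^2-1)/((A*B)^2+1)) :=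
        mul_le_mul_of_nonneg_right hco (by positivity)
    _ = 1 := by
        rw [div_mul_div_comm, mul_comm ((A*B)^2-1)]
        exact div_self (by positivity)

lemma half_div (a b : ℝ) : (a/2)/(b/2) = a/b := by
  rw [div_div_div_comm, div_self (two_ne_zero), div_one]

lemma coth_exp (v : ℝ) : Real.cosh v / Real.sinh v
    = (Real.exp v + (Real.exp v)⁻¹)/(Real.exp v - (Real.exp v)⁻¹) := by
  rw [Real.cosh_eq, Real.sinh_eq, Real.exp_neg, half_div]

lemma inv_ratio {y : ℝ} (hy : y ≠ 0) : (y⁻¹+1)/(y⁻¹-1) = -((y+1)/(y-1)) := by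
  by_cases h1 : y = 1
  · simp [h1]
  · have h2 : y - 1 ≠ 0 := sub_ne_zero.2 h1
    have h2' : 1 - y ≠ 0 := fun h => h1 (by linarith [sub_eq_zero.1 h])
    have h3 : y⁻¹ - 1 ≠ 0 := by
      rw [ne_eq, sub_eq_zero, inv_eq_one]
      exact h1
    field_simp
    ring

lemma inv_ratio2 {x y : ℝ} (hx : x ≠ 0) (hy : y ≠ 0) :
    (y⁻¹+x⁻¹)/(x⁻¹-y⁻¹) = -((y+x)/(x-y)) := by
  by_cases hxy : x = y
  · simp [hxy]
  · have h2 : x - y ≠ 0 := sub_ne_zero.2 hxy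
    have h3 : x⁻¹ - y⁻¹ ≠ 0 := sub_ne_zero.2 (fun h => hxy (inv_inj.1 h))
    rw [show -((y+x)/(x-y)) = (-(y+x))/(x-y) from (neg_div _ _).symm,
      div_eq_div_iff h3 h2]
    field_simp
    ring

lemma inv_invariance {x y : ℝ} (hx : x ≠ 0) (hy : y ≠ 0) :
    (y⁻¹+1)/(x⁻¹+1) / ((y⁻¹-1)/(x⁻¹-1)) = (y+1)/(x+1) / ((y-1)/(x-1)) := by
  rw [div_div_div_comm, inv_ratio hy, inv_ratio hx, neg_div_neg_eq, ← div_div_div_comm]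

lemma inv_invariance2 {x y : ℝ} (hx : x ≠ 0) (hy : y ≠ 0) :
    (y⁻¹+x⁻¹)/(x⁻¹+1) / ((x⁻¹-y⁻¹)/(x⁻¹-1)) = (y+x)/(x+1) / ((x-y)/(x-1)) := by
  rw [div_div_div_comm, inv_ratio2 hx hy, inv_ratio hx, neg_div_neg_eq, ← div_div_div_comm]

lemma star_lemma {x t : ℝ} (hx0 : 0 < x) (hx1 : x ≠ 1) (ht0 : 0 < t) (ht1 : t < 1) :
    t * (t * ((x^t+1)/(x+1)) / ((x^t-1)/(x-1)))
      + (1-t) * ((1-t) * ((x^t+x)/(x+1)) / ((x-x^t)/(x-1))) ≤ 1 := by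
  rcases lt_or_gt_of_ne hx1 with hx | hx
  · -- x < 1
    set s : ℝ := -(Real.log x) / 2 with hs_def
    have hs : 0 < s := by
      have := Real.log_neg hx0 hx
      rw [hs_def]; linarith
    set A : ℝ := Real.exp (t*s) with hA_def
    set B : ℝ := Real.exp ((1-t)*s) with hB_def
    have hA : 1 < A := Real.one_lt_exp_iff.2 (mul_pos ht0 hs)
    have hB : 1 < B := Real.one_lt_exp_iff.2 (mul_pos (by linarith) hs)
    have hAB : A*B = Real.exp s := by rw [hA_def, hB_def, ← Real.exp_add]; ring_nf
    have hxe : x = ((A*B)^2)⁻¹ := by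
      rw [hAB, sq, ← Real.exp_add, ← Real.exp_neg]
      rw [show -(s+s) = Real.log x by rw [hs_def]; ring, Real.exp_log hx0]
    have hye : x^t = (A^2)⁻¹ := by
      rw [Real.rpow_def_of_pos hx0, hA_def, sq, ← Real.exp_add, ← Real.exp_neg]
      congr 1
      rw [hs_def]; ring
    have hco : t^2 * ((A+A⁻¹)/(A-A⁻¹)) + (1-t)^2 * ((B+B⁻¹)/(B-B⁻¹))
        ≤ ((A*B)+(A*B)⁻¹)/((A*B)-(A*B)⁻¹) := by
      have h := coth_ineq hs ht0 ht1
      rwa [coth_exp, coth_exp, coth_exp, ← hA_def, ← hB_def, ← hAB] at h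
    have hcore := star_core hA hB hco ht0 ht1
    rw [hye, hxe]
    have hA2 : (A:ℝ)^2 ≠ 0 := by positivity
    have hAB2 : ((A*B):ℝ)^2 ≠ 0 := by positivity
    rw [mul_div_assoc, mul_div_assoc, inv_invariance hAB2 hA2,
      inv_invariance2 hAB2 hA2]
    ring_nf
    ring_nf at hcore
    exact hcore
  · -- 1 < x
    set s : ℝ := Real.log x / 2 with hs_def
    have hs : 0 < s := by
      have := Real.log_pos hx
      rw [hs_def]; linarith
    set A : ℝ := Real.exp (t*s) with hA_def
    set B : ℝ := Real.exp ((1-t)*s) with hB_def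
    have hA : 1 < A := Real.one_lt_exp_iff.2 (mul_pos ht0 hs)
    have hB : 1 < B := Real.one_lt_exp_iff.2 (mul_pos (by linarith) hs)
    have hAB : A*B = Real.exp s := by rw [hA_def, hB_def, ← Real.exp_add]; ring_nf
    have hxe : x = (A*B)^2 := by
      rw [hAB, sq, ← Real.exp_add]
      rw [show s+s = Real.log x by rw [hs_def]; ring, Real.exp_log hx0]
    have hye : x^t = A^2 := by
      rw [Real.rpow_def_of_pos hx0, hA_def, sq, ← Real.exp_add]
      congr 1
      rw [hs_def]; ring
    have hco : t^2 * ((A+A⁻¹)/(A-A⁻¹)) + (1-t)^2 * ((B+B⁻¹)/(B-B⁻¹))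
        ≤ ((A*B)+(A*B)⁻¹)/((A*B)-(A*B)⁻¹) := by
      have h := coth_ineq hs ht0 ht1
      rwa [coth_exp, coth_exp, coth_exp, ← hA_def, ← hB_def, ← hAB] at h
    rw [hye, hxe]
    exact star_core hA hB hco ht0 ht1

theorem L_le_K (x t : ℝ) (hx : 0 < x) (hx1 : x ≠ 1) (ht0 : 0 < t) (ht1 : t < 1) :
    L x t ≤ K x t := by
  have h1t : 0 < 1 - t := by linarith
  set y : ℝ := x ^ t with hy_def
  have hy0 : 0 < y := Real.rpow_pos_of_pos hx t
  have hx1' : x - 1 ≠ 0 := sub_ne_zero.2 hx1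
  set a : ℝ := (y - 1)/(x - 1) with ha_def
  set b : ℝ := (x - y)/(x - 1) with hb_def
  have hax : 0 < a ∧ 0 < b := by
    rcases lt_or_gt_of_ne hx1 with h | h
    · have hylt : y < 1 := Real.rpow_lt_one hx.le h ht0
      have hxy : x < y := by
        have := Real.rpow_lt_rpow_of_exponent_gt hx h ht1
        rwa [Real.rpow_one] at this
      constructor
      · rw [ha_def]; apply div_pos_of_neg_of_neg <;> linarith
      · rw [hb_def]; apply div_pos_of_neg_of_neg <;> linarith
    · have hylt : 1 < y := Real.one_lt_rpow_iff_of_pos hx |>.2 (Or.inl ⟨h, ht0⟩)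
      have hxy : y < x := by
        have := Real.rpow_lt_rpow_of_exponent_lt h ht1
        rwa [Real.rpow_one] at this
      constructor
      · rw [ha_def]; apply div_pos <;> linarith
      · rw [hb_def]; apply div_pos <;> linarith
  obtain ⟨ha, hb⟩ := hax
  -- closed form of K
  have habq : a/b = (y-1)/(x-y) := by
    rw [ha_def, hb_def, div_div_div_comm, div_self hx1', div_one]
  have hK : K x t = a^t * b^(1-t) / (t^t * (1-t)^(1-t)) := by
    rw [K]
    have e1 : (y - x)/((t-1)*(x-1)) = b/(1-t) := by
      rw [show y-x = -(x-y) by ring, show (t-1)*(x-1) = -((1-t)*(x-1)) by ring,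
        neg_div_neg_eq, hb_def, div_div, mul_comm (x-1)]
    have e2 : ((t-1)/t) * ((y-1)/(y-x)) = ((1-t)/t) * (a/b) := by
      rw [habq, show t-1 = -(1-t) by ring, show y-x = -(x-y) by ring,
        neg_div, div_neg, neg_mul_neg]
    rw [e1, e2, Real.mul_rpow (by positivity) (by positivity),
      Real.div_rpow h1t.le ht0.le, Real.div_rpow ha.le hb.le,
      Real.rpow_sub hb, Real.rpow_sub h1t, Real.rpow_one, Real.rpow_one]
    have n1 : t^t ≠ 0 := by positivity
    have n2 : (1-t)^t ≠ 0 := by positivity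
    have n3 : b^t ≠ 0 := by positivity
    have n4 : (1-t) ≠ 0 := by positivity
    field_simp
  -- AM-GM part
  set C : ℝ := (y + x)/(x + 1) with hC_def
  set CD : ℝ := (y + 1)/(x + 1) with hCD_def
  have hC : 0 < C := by rw [hC_def]; positivity
  have hCD : 0 < CD := by rw [hCD_def]; positivity
  set P : ℝ := t * CD / a with hP_def
  set Q : ℝ := (1-t) * C / b with hQ_def
  have hP : 0 < P := by rw [hP_def]; positivity
  have hQ : 0 < Q := by rw [hQ_def]; positivity
  have hamgm : P^t * Q^(1-t) ≤ t * P + (1-t) * Q :=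
    Real.geom_mean_le_arith_mean2_weighted ht0.le h1t.le hP.le hQ.le (by ring)
  have hstar : t * P + (1-t) * Q ≤ 1 := by
    have := star_lemma hx hx1 ht0 ht1
    rw [hP_def, hQ_def, hCD_def, hC_def, ha_def, hb_def]
    convert this using 3
  have hPQ : P^t * Q^(1-t) ≤ 1 := hamgm.trans hstar
  -- express L
  have hL : L x t = CD^t * C^(1-t) := by
    rw [L, ← hy_def, ← hC_def]
    have e : (y+1)/(y+x) = CD/C := by
      rw [hCD_def, hC_def, div_div_div_comm, div_self (by positivity : x+1 ≠ 0), div_one]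
    rw [e, Real.div_rpow hCD.le hC.le, Real.rpow_sub hC, Real.rpow_one]
    have : C^t ≠ 0 := by positivity
    field_simp
  have hPt : P^t = t^t * CD^t / a^t := by
    rw [hP_def, Real.div_rpow (by positivity) ha.le, Real.mul_rpow ht0.le hCD.le]
  have hQt : Q^(1-t) = (1-t)^(1-t) * C^(1-t) / b^(1-t) := by
    rw [hQ_def, Real.div_rpow (by positivity) hb.le, Real.mul_rpow h1t.le hC.le]
  have hkey : L x t * (t^t * (1-t)^(1-t)) = (P^t * Q^(1-t)) * (a^t * b^(1-t)) := by
    rw [hL, hPt, hQt]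
    have n1 : a^t ≠ 0 := by positivity
    have n2 : b^(1-t) ≠ 0 := by positivity
    field_simp
  have habpos : 0 < a^t * b^(1-t) := by positivity
  have hdenpos : 0 < t^t * (1-t)^(1-t) := by positivity
  rw [hK]
  rw [le_div_iff₀ hdenpos]
  calc L x t * (t^t * (1-t)^(1-t)) = (P^t * Q^(1-t)) * (a^t * b^(1-t)) := hkey
    _ ≤ 1 * (a^t * b^(1-t)) := mul_le_mul_of_nonneg_right hPQ habpos.le
    _ = a^t * b^(1-t) := one_mul _
end

section
/- Define L(x,t) = ((x^t + x)/(x+1)) · ((x^t + 1)/(x^t + x))^t and K(x,t) the generalized Kantorovich constant. Then for all t > 1 and all x > 0 with x ≠ 1, L(x,t) ≥ K(x,t). -/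
open Real

lemma tanh_formula (z : ℝ) (hz : 0 < z) :
    Real.sinh (Real.log z / 2) / Real.cosh (Real.log z / 2) = (z - 1) / (z + 1) := by
  have hs : Real.exp (Real.log z / 2) ^ 2 = z := by
    rw [sq, ← Real.exp_add]
    rw [show Real.log z / 2 + Real.log z / 2 = Real.log z by ring]
    exact Real.exp_log hz
  set s := Real.exp (Real.log z / 2) with hsdef
  have hspos : 0 < s := Real.exp_pos _
  have key : (s - s⁻¹) / 2 / ((s + s⁻¹) / 2) = (z - 1) / (z + 1) := by
    rw [← hs]
    have h1 : s + s⁻¹ ≠ 0 := by positivity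
    have h2 : (s:ℝ) ^ 2 + 1 ≠ 0 := by positivity
    field_simp
  rw [Real.sinh_eq, Real.cosh_eq, Real.exp_neg, ← hsdef]
  exact key

lemma aux_anti {u v : ℝ} (hu : 0 < u) (huv : u ≤ v) :
    Real.sinh v / (Real.cosh v * v) ≤ Real.sinh u / (Real.cosh u * u) := by
  have hder : ∀ w : ℝ, 0 < w → HasDerivAt (fun w => Real.sinh w / (Real.cosh w * w))
      ((Real.cosh w * (Real.cosh w * w) - Real.sinh w * (Real.sinh w * w + Real.cosh w * 1))
        / (Real.cosh w * w) ^ 2) w := by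
    intro w hw
    have hden : Real.cosh w * w ≠ 0 := by positivity
    exact (Real.hasDerivAt_sinh w).div ((Real.hasDerivAt_cosh w).mul (hasDerivAt_id w)) hden
  have hanti : AntitoneOn (fun w => Real.sinh w / (Real.cosh w * w)) (Set.Ici u) := by
    apply antitoneOn_of_deriv_nonpos (convex_Ici u)
    · intro w hw
      exact (hder w (lt_of_lt_of_le hu hw)).continuousAt.continuousWithinAt
    · intro w hw
      rw [interior_Ici] at hw
      exact ((hder w (hu.trans hw)).differentiableAt).differentiableWithinAt
    · intro w hw
      rw [interior_Ici] at hw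
      have hw0 : 0 < w := hu.trans hw
      rw [(hder w hw0).deriv]
      apply div_nonpos_of_nonpos_of_nonneg _ (by positivity)
      nlinarith [Real.self_lt_sinh_iff.mpr hw0, Real.one_le_cosh w, Real.cosh_sq w,
        Real.sinh_pos_iff.mpr hw0]
  exact hanti Set.self_mem_Ici huv huv

lemma key_ineq (t c : ℝ) (ht : 1 < t) (hc : 0 < c) :
    (Real.sinh (t * c) / Real.cosh (t * c) / t) ^ t ≤
      (Real.sinh c / Real.cosh c) *
        (Real.sinh ((t - 1) * c) / Real.cosh ((t - 1) * c) / (t - 1)) ^ (t - 1) := by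
  have ht0 : (0:ℝ) < t := by linarith
  have ht1 : (0:ℝ) < t - 1 := by linarith
  have htc : 0 < t * c := by positivity
  have ht1c : 0 < (t - 1) * c := by positivity
  have h1 := aux_anti hc (show c ≤ t * c by nlinarith)
  have h2 := aux_anti ht1c (show (t - 1) * c ≤ t * c by nlinarith)
  have e0 : Real.sinh (t * c) / Real.cosh (t * c) / t
      = Real.sinh (t * c) / (Real.cosh (t * c) * (t * c)) * c := by
    field_simp
  have hA : Real.sinh (t * c) / Real.cosh (t * c) / t ≤ Real.sinh c / Real.cosh c := by
    rw [e0, show Real.sinh c / Real.cosh c = Real.sinh c / (Real.cosh c * c) * c by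
      field_simp]
    exact mul_le_mul_of_nonneg_right h1 hc.le
  have hB : Real.sinh (t * c) / Real.cosh (t * c) / t
      ≤ Real.sinh ((t - 1) * c) / Real.cosh ((t - 1) * c) / (t - 1) := by
    rw [e0, show Real.sinh ((t - 1) * c) / Real.cosh ((t - 1) * c) / (t - 1)
        = Real.sinh ((t - 1) * c) / (Real.cosh ((t - 1) * c) * ((t - 1) * c)) * c by
      field_simp]
    exact mul_le_mul_of_nonneg_right h2 hc.le
  have hApos : 0 < Real.sinh (t * c) / Real.cosh (t * c) / t :=
    div_pos (div_pos (Real.sinh_pos_iff.mpr htc) (Real.cosh_pos _)) ht0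
  calc (Real.sinh (t * c) / Real.cosh (t * c) / t) ^ t
      = (Real.sinh (t * c) / Real.cosh (t * c) / t) ^ (1:ℝ) *
        (Real.sinh (t * c) / Real.cosh (t * c) / t) ^ (t - 1) := by
        rw [← Real.rpow_add hApos]; ring_nf
    _ ≤ (Real.sinh c / Real.cosh c) *
        (Real.sinh ((t - 1) * c) / Real.cosh ((t - 1) * c) / (t - 1)) ^ (t - 1) := by
        apply mul_le_mul
        · rw [Real.rpow_one]; exact hA
        · exact Real.rpow_le_rpow hApos.le hB ht1.le
        · positivity
        · exact le_trans hApos.le (by rw [← Real.rpow_one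
            (Real.sinh (t * c) / Real.cosh (t * c) / t)] at hA ⊢; exact hA)


lemma alg (t x y p q r : ℝ) (ht : 1 < t)
    (hp : 0 < p) (hq : 0 < q) (hr : 0 ≤ r)
    (hy1 : 0 < y + 1) (hyx : 0 < y + x)
    (hKfac : 0 ≤ (y - x) / ((t - 1) * (x - 1)))
    (hB : (t - 1) / t * ((y - 1) / (y - x))
      = p / t * ((q / (t - 1))⁻¹ * ((y + 1) / (y + x))))
    (hL : (y - x) / ((t - 1) * (x - 1)) * (r * (q / (t - 1))⁻¹) = (y + x) / (x + 1))
    (hkey : (p / t) ^ t ≤ r * (q / (t - 1)) ^ (t - 1)) :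
    (y - x) / ((t - 1) * (x - 1)) * ((t - 1) / t * ((y - 1) / (y - x))) ^ t
      ≤ (y + x) / (x + 1) * ((y + 1) / (y + x)) ^ t := by
  have ht0 : (0:ℝ) < t := by linarith
  have ht1 : (0:ℝ) < t - 1 := by linarith
  set a := q / (t - 1) with hadef
  have ha : 0 < a := div_pos hq ht1
  set D := (y + 1) / (y + x) with hDdef
  have hD : 0 < D := div_pos hy1 hyx
  rw [hB]
  have hexp : (p / t * (a⁻¹ * D)) ^ t = (p / t) ^ t * ((a⁻¹) ^ t * D ^ t) := by
    rw [Real.mul_rpow (by positivity) (by positivity),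
      Real.mul_rpow (by positivity) hD.le]
  rw [hexp, ← mul_assoc]
  have step : (y - x) / ((t - 1) * (x - 1)) * (p / t) ^ t
      ≤ (y - x) / ((t - 1) * (x - 1)) * (r * a ^ (t - 1)) :=
    mul_le_mul_of_nonneg_left hkey hKfac
  have hfin : (y - x) / ((t - 1) * (x - 1)) * (r * a ^ (t - 1)) * ((a⁻¹) ^ t * D ^ t)
      = (y + x) / (x + 1) * D ^ t := by
    have h3 : a ^ (t - 1) * (a⁻¹) ^ t = a⁻¹ := by
      rw [Real.inv_rpow ha.le, ← Real.rpow_neg ha.le, ← Real.rpow_add ha]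
      rw [show t - 1 + -t = -1 by ring, Real.rpow_neg_one]
    calc (y - x) / ((t - 1) * (x - 1)) * (r * a ^ (t - 1)) * ((a⁻¹) ^ t * D ^ t)
        = (y - x) / ((t - 1) * (x - 1)) * (r * (a ^ (t - 1) * (a⁻¹) ^ t)) * D ^ t := by
          ring
      _ = (y + x) / (x + 1) * D ^ t := by rw [h3, hL]
  calc (y - x) / ((t - 1) * (x - 1)) * (p / t) ^ t * ((a⁻¹) ^ t * D ^ t)
      ≤ (y - x) / ((t - 1) * (x - 1)) * (r * a ^ (t - 1)) * ((a⁻¹) ^ t * D ^ t) :=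
        mul_le_mul_of_nonneg_right step (by positivity)
    _ = (y + x) / (x + 1) * D ^ t := hfin

theorem K_le_L (x t : ℝ) (hx : 0 < x) (hx1 : x ≠ 1) (ht : 1 < t) :
    K x t ≤ L x t := by
  have ht0 : (0:ℝ) < t := by linarith
  have ht1 : (0:ℝ) < t - 1 := by linarith
  have htne : t ≠ 0 := ne_of_gt ht0
  have ht1ne : t - 1 ≠ 0 := ne_of_gt ht1
  unfold K L
  set y := x ^ t with hydef
  have hy0 : 0 < y := Real.rpow_pos_of_pos hx t
  rcases hx1.lt_or_gt with hlt | hgt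
  · -- case x < 1
    have hyx : y < x := by
      have := Real.rpow_lt_rpow_of_exponent_gt hx hlt ht
      rwa [Real.rpow_one] at this
    have hy1 : y < 1 := hyx.trans hlt
    have d1 : x - y ≠ 0 := ne_of_gt (by linarith)
    have d2 : x + y ≠ 0 := ne_of_gt (by linarith)
    have d3 : (1:ℝ) + y ≠ 0 := ne_of_gt (by linarith)
    have d4 : (1:ℝ) + x ≠ 0 := ne_of_gt (by linarith)
    have d5 : y - x ≠ 0 := by intro h; exact d1 (by linarith)
    have d6 : y + x ≠ 0 := ne_of_gt (by linarith)
    have d7 : y + 1 ≠ 0 := ne_of_gt (by linarith)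
    have d8 : x + 1 ≠ 0 := ne_of_gt (by linarith)
    have d9 : x - 1 ≠ 0 := ne_of_lt (by linarith)
    have d10 : y - 1 ≠ 0 := ne_of_lt (by linarith)
    have d11 : (1:ℝ) - x ≠ 0 := ne_of_gt (by linarith)
    have d12 : (1:ℝ) - y ≠ 0 := ne_of_gt (by linarith)
    set c := Real.log x⁻¹ / 2 with hcdef
    have hc : 0 < c := by
      have h1x : (1:ℝ) < x⁻¹ := by
        rw [lt_inv_comm₀ one_pos hx]; simpa using hlt
      have := Real.log_pos h1x
      positivity
    have hTt : Real.sinh (t * c) / Real.cosh (t * c) = (1 - y) / (1 + y) := by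
      have e : t * c = Real.log y⁻¹ / 2 := by
        rw [hcdef, Real.log_inv, Real.log_inv, hydef, Real.log_rpow hx]; ring
      rw [e, tanh_formula y⁻¹ (by positivity)]
      rw [div_eq_div_iff (by positivity) (by positivity)]
      field_simp
    have hTt1 : Real.sinh ((t - 1) * c) / Real.cosh ((t - 1) * c) = (x - y) / (x + y) := by
      have e : (t - 1) * c = Real.log (x / y) / 2 := by
        rw [hcdef, Real.log_inv, Real.log_div (ne_of_gt hx) (ne_of_gt hy0),
          hydef, Real.log_rpow hx]; ring
      rw [e, tanh_formula (x / y) (by positivity)]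
      rw [div_eq_div_iff (by positivity) (by positivity)]
      field_simp
    have hTc : Real.sinh c / Real.cosh c = (1 - x) / (1 + x) := by
      rw [hcdef, tanh_formula x⁻¹ (by positivity)]
      rw [div_eq_div_iff (by positivity) (by positivity)]
      field_simp
    have hkey := key_ineq t c ht hc
    rw [hTt, hTt1, hTc] at hkey
    apply alg t x y ((1 - y) / (1 + y)) ((x - y) / (x + y)) ((1 - x) / (1 + x)) ht
    · exact div_pos (by linarith) (by linarith)
    · exact div_pos (by linarith) (by linarith)
    · exact div_nonneg (by linarith) (by linarith)
    · linarith
    · linarith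
    · rw [div_nonneg_iff]
      right
      constructor <;> nlinarith
    · field_simp
      ring
    · field_simp
      ring
    · exact hkey
  · -- case 1 < x
    have hyx : x < y := by
      have := Real.rpow_lt_rpow_of_exponent_lt hgt ht
      rwa [Real.rpow_one] at this
    have hy1 : 1 < y := hgt.trans hyx
    have d1 : y - x ≠ 0 := ne_of_gt (by linarith)
    have d2 : y + x ≠ 0 := ne_of_gt (by linarith)
    have d3 : y + 1 ≠ 0 := ne_of_gt (by linarith)
    have d4 : x + 1 ≠ 0 := ne_of_gt (by linarith)
    have d9 : x - 1 ≠ 0 := ne_of_gt (by linarith)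
    have d10 : y - 1 ≠ 0 := ne_of_gt (by linarith)
    set c := Real.log x / 2 with hcdef
    have hc : 0 < c := by
      have := Real.log_pos hgt
      positivity
    have hTt : Real.sinh (t * c) / Real.cosh (t * c) = (y - 1) / (y + 1) := by
      have e : t * c = Real.log y / 2 := by
        rw [hcdef, hydef, Real.log_rpow hx]; ring
      rw [e, tanh_formula y (by positivity)]
    have hTt1 : Real.sinh ((t - 1) * c) / Real.cosh ((t - 1) * c) = (y - x) / (y + x) := by
      have e : (t - 1) * c = Real.log (y / x) / 2 := by
        rw [hcdef, Real.log_div (ne_of_gt hy0) (ne_of_gt hx), hydef, Real.log_rpow hx]; ring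
      rw [e, tanh_formula (y / x) (by positivity)]
      rw [div_eq_div_iff (by positivity) (by positivity)]
      field_simp
    have hTc : Real.sinh c / Real.cosh c = (x - 1) / (x + 1) :=
      tanh_formula x hx
    have hkey := key_ineq t c ht hc
    rw [hTt, hTt1, hTc] at hkey
    apply alg t x y ((y - 1) / (y + 1)) ((y - x) / (y + x)) ((x - 1) / (x + 1)) ht
    · exact div_pos (by linarith) (by linarith)
    · exact div_pos (by linarith) (by linarith)
    · exact div_nonneg (by linarith) (by linarith)
    · linarith
    · linarith
    · exact div_nonneg (by nlinarith) (by nlinarith)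
    · field_simp
    · field_simp
    · exact hkey
end

section
/- For the generalized Kantorovich constant K(x,t), one has K(x², t) ≤ K(x,t)² for all x > 0, x ≠ 1, and all 0 < t < 1. -/
/-- `2(y-1) ≤ (y+1) log y` for `y ≥ 1`. -/
private lemma log_lower {y : ℝ} (hy : 1 ≤ y) : 2 * (y - 1) ≤ (y + 1) * Real.log y := by
  have hmono : MonotoneOn (fun z : ℝ => (z + 1) * Real.log z - 2 * (z - 1)) (Set.Ici 1) := by
    have hder : ∀ z : ℝ, 1 < z → HasDerivAt (fun z : ℝ => (z + 1) * Real.log z - 2 * (z - 1))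
        (1 * Real.log z + (z + 1) * z⁻¹ - 2 * 1) z := by
      intro z hz
      have h1 : HasDerivAt (fun z : ℝ => z + 1) 1 z := (hasDerivAt_id z).add_const 1
      have h2 : HasDerivAt (fun z : ℝ => z - 1) 1 z := (hasDerivAt_id z).sub_const 1
      exact (h1.mul (Real.hasDerivAt_log (by linarith))).sub (h2.const_mul 2)
    apply monotoneOn_of_deriv_nonneg (convex_Ici 1)
    · intro z hz
      have hz1 : (1:ℝ) ≤ z := hz
      exact (((continuousAt_id.add continuousAt_const).mul
        (Real.continuousAt_log (by linarith))).sub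
        ((continuousAt_id.sub continuousAt_const).const_mul 2)).continuousWithinAt
    · intro z hz
      rw [interior_Ici] at hz
      have hz1 : (1:ℝ) < z := hz
      exact (hder z hz1).differentiableAt.differentiableWithinAt
    · intro z hz
      rw [interior_Ici] at hz
      have hz1 : (1:ℝ) < z := hz
      rw [(hder z hz1).deriv]
      have hz0 : (0:ℝ) < z := by linarith
      have hlog : 1 - z⁻¹ ≤ Real.log z := by
        have h := Real.log_le_sub_one_of_pos (inv_pos.2 hz0)
        rw [Real.log_inv] at h; linarith
      have hzz : z * z⁻¹ = 1 := mul_inv_cancel₀ (ne_of_gt hz0)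
      nlinarith [hlog, hzz]
  have h := hmono Set.self_mem_Ici (Set.mem_Ici.2 hy) hy
  simp only [Real.log_one] at h
  linarith

private lemma log_lower' {b c : ℝ} (hb : 0 < b) (hbc : b ≤ c) :
    2 * (c - b) ≤ (c + b) * (Real.log c - Real.log b) := by
  have hc : 0 < c := lt_of_lt_of_le hb hbc
  have h := log_lower ((one_le_div hb).2 hbc)
  rw [Real.log_div hc.ne' hb.ne'] at h
  have h2 := mul_le_mul_of_nonneg_right h hb.le
  have hcb : c / b * b = c := div_mul_cancel₀ c hb.ne'
  have hΔ : 0 ≤ Real.log c - Real.log b := sub_nonneg.2 (Real.log_le_log hb hbc)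
  nlinarith [h2, hcb, hΔ]

private lemma log_upper' {b c : ℝ} (hb : 0 < b) (hbc : b ≤ c) :
    b * (Real.log c - Real.log b) ≤ c - b := by
  have hc : 0 < c := lt_of_lt_of_le hb hbc
  have h := Real.log_le_sub_one_of_pos (div_pos hc hb)
  rw [Real.log_div hc.ne' hb.ne'] at h
  have h2 := mul_le_mul_of_nonneg_left h hb.le
  have hcb : b * (c / b) = c := mul_div_cancel₀ c hb.ne'
  nlinarith [h2, hcb]


private lemma key_alg {A B C t : ℝ} (hAB : 0 < A + B) (hC : (A + B) * C = 1 + A * B)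
    (hd : (t * A - (1 - t) * B) ^ 2 ≤ 1) : t ^ 2 * A + (1 - t) ^ 2 * B ≤ C := by
  have h1 : (A + B) * (t ^ 2 * A + (1 - t) ^ 2 * B) ≤ (A + B) * C := by nlinarith [hd, hC]
  exact le_of_mul_le_mul_left h1 hAB

private lemma coth_bound {x a t l : ℝ} (hx : 1 < x) (ht0 : 0 < t) (ht1 : t < 1)
    (ha1 : 1 < a) (hax : a < x) (hl0 : 0 < l)
    (E1 : 2 * (a - 1) ≤ (a + 1) * (t * l)) (E2 : t * l ≤ a - 1)
    (E3 : 2 * (x - a) ≤ (x + a) * ((1 - t) * l)) (E4 : a * ((1 - t) * l) ≤ x - a) :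
    t ^ 2 * ((a + 1) / (a - 1)) + (1 - t) ^ 2 * ((x + a) / (x - a)) ≤ (x + 1) / (x - 1) := by
  have ha1' : (0:ℝ) < a - 1 := by linarith
  have hxa' : (0:ℝ) < x - a := by linarith
  have hx1' : (0:ℝ) < x - 1 := by linarith
  have hA_low : 2 / l ≤ t * ((a + 1) / (a - 1)) := by
    rw [show t * ((a + 1) / (a - 1)) = t * (a + 1) / (a - 1) by ring,
      div_le_div_iff₀ hl0 ha1']
    nlinarith [E1]
  have hA_high : t * ((a + 1) / (a - 1)) ≤ 2 / l + t := by
    rw [show t * ((a + 1) / (a - 1)) = t * (a + 1) / (a - 1) by ring,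
      show 2 / l + t = (2 + t * l) / l by field_simp,
      div_le_div_iff₀ ha1' hl0]
    nlinarith [E2]
  have hB_low : 2 / l ≤ (1 - t) * ((x + a) / (x - a)) := by
    rw [show (1 - t) * ((x + a) / (x - a)) = (1 - t) * (x + a) / (x - a) by ring,
      div_le_div_iff₀ hl0 hxa']
    nlinarith [E3]
  have hB_high : (1 - t) * ((x + a) / (x - a)) ≤ 2 / l + (1 - t) := by
    rw [show (1 - t) * ((x + a) / (x - a)) = (1 - t) * (x + a) / (x - a) by ring,
      show 2 / l + (1 - t) = (2 + (1 - t) * l) / l by field_simp,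
      div_le_div_iff₀ hxa' hl0]
    nlinarith [E4]
  have hd : (t * ((a + 1) / (a - 1)) - (1 - t) * ((x + a) / (x - a))) ^ 2 ≤ 1 := by
    nlinarith [mul_nonneg
      (by linarith : (0:ℝ) ≤ 1 - (t * ((a + 1) / (a - 1)) - (1 - t) * ((x + a) / (x - a))))
      (by linarith : (0:ℝ) ≤ 1 + (t * ((a + 1) / (a - 1)) - (1 - t) * ((x + a) / (x - a))))]
  have hCid : ((a + 1) / (a - 1) + (x + a) / (x - a)) * ((x + 1) / (x - 1))
      = 1 + ((a + 1) / (a - 1)) * ((x + a) / (x - a)) := by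
    field_simp
    ring
  have hABpos : (0:ℝ) < (a + 1) / (a - 1) + (x + a) / (x - a) := by
    have h1 : (0:ℝ) < (a + 1) / (a - 1) := div_pos (by linarith) ha1'
    have h2 : (0:ℝ) < (x + a) / (x - a) := div_pos (by linarith) hxa'
    linarith
  exact key_alg hABpos hCid hd


private lemma split1 (x a t : ℝ) (h1 : x ^ 2 - 1 ≠ 0) (h2 : x + 1 ≠ 0) (h3 : x - 1 ≠ 0)
    (h4 : x - a ≠ 0) (h5 : a - x ≠ 0) (ht1' : t - 1 ≠ 0) :
    (a ^ 2 - x ^ 2) / ((t - 1) * (x ^ 2 - 1)) =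
      (((a + x) * (1 - t) * (x - 1)) / ((x + 1) * (x - a))) * ((a - x) / ((t - 1) * (x - 1))) ^ 2 := by
  field_simp
  ring

private lemma split2 (x a t : ℝ) (h1 : a ^ 2 - x ^ 2 ≠ 0) (h4 : x - a ≠ 0) (h5 : a - x ≠ 0)
    (h6 : a - 1 ≠ 0) (h7 : a + x ≠ 0) (h8 : (1:ℝ) - t ≠ 0) (ht : t ≠ 0) :
    ((t - 1) / t) * ((a ^ 2 - 1) / (a ^ 2 - x ^ 2)) =
      ((t * (a + 1) * (x - a)) / ((1 - t) * (a - 1) * (a + x))) *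
        (((t - 1) / t) * ((a - 1) / (a - x))) ^ 2 := by
  field_simp
  ring

private lemma split3 (x a t : ℝ) (h2 : x + 1 ≠ 0) (h3 : x - 1 ≠ 0) (h4 : x - a ≠ 0)
    (h6 : a - 1 ≠ 0) (h7 : a + x ≠ 0) (h8 : (1:ℝ) - t ≠ 0) :
    (1 - t) * (((a + x) * (1 - t) * (x - 1)) / ((x + 1) * (x - a))) +
      t * ((((a + x) * (1 - t) * (x - 1)) / ((x + 1) * (x - a))) *
        ((t * (a + 1) * (x - a)) / ((1 - t) * (a - 1) * (a + x)))) =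
      ((x - 1) / (x + 1)) *
        (t ^ 2 * ((a + 1) / (a - 1)) + (1 - t) ^ 2 * ((x + a) / (x - a))) := by
  field_simp
  ring

private lemma inv_aux1 (x b t : ℝ) (hxne : x ≠ 0) (hane : b ≠ 0) (ht1' : t - 1 ≠ 0)
    (hx1ne : x - 1 ≠ 0) :
    (b⁻¹ - x⁻¹) / ((t - 1) * (x⁻¹ - 1)) = ((b - x) / ((t - 1) * (x - 1))) / b := by
  have h1 : x⁻¹ - 1 = (1 - x) / x := by field_simp
  have h2 : b⁻¹ - x⁻¹ = (x - b) / (b * x) := by field_simp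
  have h3 : (1:ℝ) - x ≠ 0 := by intro h; apply hx1ne; linarith
  rw [h1, h2]
  field_simp
  ring

private lemma inv_aux2 (x b t : ℝ) (hxne : x ≠ 0) (hane : b ≠ 0) (ht : t ≠ 0)
    (haxne' : b - x ≠ 0) (ha1ne' : b - 1 ≠ 0) :
    ((t - 1) / t) * ((b⁻¹ - 1) / (b⁻¹ - x⁻¹)) = x * (((t - 1) / t) * ((b - 1) / (b - x))) := by
  have h1 : b⁻¹ - 1 = (1 - b) / b := by field_simp
  have h2 : b⁻¹ - x⁻¹ = (x - b) / (b * x) := by field_simp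
  have h3 : (1:ℝ) - b ≠ 0 := by intro h; apply ha1ne'; linarith
  have h4 : x - b ≠ 0 := by intro h; apply haxne'; linarith
  rw [h1, h2]
  field_simp
  ring

private lemma K_inv {x t : ℝ} (hx : 0 < x) (hx1 : x ≠ 1) (ht0 : 0 < t) (ht1 : t < 1) :
    K x⁻¹ t = K x t := by
  have ht : t ≠ 0 := ne_of_gt ht0
  have ht1' : t - 1 ≠ 0 := by intro h; exact absurd (by linarith : t = 1) (by linarith)
  have ha0 : (0:ℝ) < x ^ t := Real.rpow_pos_of_pos hx t
  have hsigns : x ^ t ≠ x ∧ x ^ t ≠ 1 ∧ 0 < ((t - 1) / t) * ((x ^ t - 1) / (x ^ t - x)) := by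
    rcases lt_or_gt_of_ne hx1 with h | h
    · have h1 : x < x ^ t := by
        nth_rewrite 1 [← Real.rpow_one x]
        exact Real.rpow_lt_rpow_of_exponent_gt hx h ht1
      have h2 : x ^ t < 1 := Real.rpow_lt_one hx.le h ht0
      exact ⟨ne_of_gt h1, ne_of_lt h2,
        mul_pos_of_neg_of_neg (div_neg_of_neg_of_pos (by linarith) ht0)
          (div_neg_of_neg_of_pos (by linarith) (by linarith))⟩
    · have h1 : x ^ t < x := by
        nth_rewrite 2 [← Real.rpow_one x]
        exact Real.rpow_lt_rpow_of_exponent_lt h ht1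
      have h2 : 1 < x ^ t := Real.one_lt_rpow_iff_of_pos hx |>.2 (Or.inl ⟨h, ht0⟩)
      exact ⟨ne_of_lt h1, ne_of_gt h2,
        mul_pos_of_neg_of_neg (div_neg_of_neg_of_pos (by linarith) ht0)
          (div_neg_of_pos_of_neg (by linarith) (by linarith))⟩
  obtain ⟨haxne, ha1ne, hC1pos⟩ := hsigns
  have hxne : x ≠ 0 := ne_of_gt hx
  have hane : x ^ t ≠ 0 := ne_of_gt ha0
  unfold K
  rw [Real.inv_rpow hx.le t,
    inv_aux1 x (x ^ t) t hxne hane ht1' (sub_ne_zero.2 hx1),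
    inv_aux2 x (x ^ t) t hxne hane ht (sub_ne_zero.2 haxne) (sub_ne_zero.2 ha1ne),
    Real.mul_rpow hx.le hC1pos.le]
  rw [div_mul_eq_mul_div, ← mul_assoc,
    mul_right_comm, mul_div_cancel_right₀ _ hane]

private lemma K_sq_le_of_one_lt {x t : ℝ} (hx : 1 < x) (ht0 : 0 < t) (ht1 : t < 1) :
    K (x ^ 2) t ≤ K x t ^ 2 := by
  have hx0 : (0:ℝ) < x := by linarith
  have ht : t ≠ 0 := ne_of_gt ht0
  have ht1' : t - 1 ≠ 0 := by intro h; exact absurd (by linarith : t = 1) (by linarith)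
  have h1t : (0:ℝ) < 1 - t := by linarith
  obtain ⟨a, hadef⟩ : ∃ a' : ℝ, a' = x ^ t := ⟨_, rfl⟩
  have ha0 : (0:ℝ) < a := hadef ▸ Real.rpow_pos_of_pos hx0 t
  have ha1 : 1 < a := hadef ▸ (Real.one_lt_rpow_iff_of_pos hx0 |>.2 (Or.inl ⟨hx, ht0⟩))
  have hax : a < x := by
    have h := Real.rpow_lt_rpow_of_exponent_lt hx ht1
    rw [Real.rpow_one] at h
    exact hadef ▸ h
  have hl0 : 0 < Real.log x := Real.log_pos hx
  have hloga : Real.log a = t * Real.log x := by rw [hadef]; exact Real.log_rpow hx0 t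
  have E1 : 2 * (a - 1) ≤ (a + 1) * (t * Real.log x) := by
    have h := log_lower' one_pos ha1.le
    rw [Real.log_one, hloga] at h; linarith
  have E2 : t * Real.log x ≤ a - 1 := by
    have h := log_upper' one_pos ha1.le
    rw [Real.log_one, hloga] at h; linarith
  have E3 : 2 * (x - a) ≤ (x + a) * ((1 - t) * Real.log x) := by
    have h := log_lower' ha0 hax.le
    rw [hloga] at h; nlinarith [h]
  have E4 : a * ((1 - t) * Real.log x) ≤ x - a := by
    have h := log_upper' ha0 hax.le
    rw [hloga] at h; nlinarith [h]
  have hkey := coth_bound hx ht0 ht1 ha1 hax hl0 E1 E2 E3 E4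
  have ha1' : (0:ℝ) < a - 1 := by linarith
  have hxa' : (0:ℝ) < x - a := by linarith
  have hx1' : (0:ℝ) < x - 1 := by linarith
  have h1 : x ^ 2 - 1 ≠ 0 := ne_of_gt (by nlinarith)
  have h1' : a ^ 2 - x ^ 2 ≠ 0 := ne_of_lt (by nlinarith)
  have h2 : x + 1 ≠ 0 := by positivity
  have h3 : x - 1 ≠ 0 := ne_of_gt hx1'
  have h4 : x - a ≠ 0 := ne_of_gt hxa'
  have h5 : a - x ≠ 0 := by intro h; apply h4; linarith
  have h6 : a - 1 ≠ 0 := ne_of_gt ha1'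
  have h7 : a + x ≠ 0 := by positivity
  have h8 : (1:ℝ) - t ≠ 0 := ne_of_gt h1t
  set B1 : ℝ := (a - x) / ((t - 1) * (x - 1)) with hB1def
  set C1 : ℝ := ((t - 1) / t) * ((a - 1) / (a - x)) with hC1def
  set P : ℝ := ((a + x) * (1 - t) * (x - 1)) / ((x + 1) * (x - a)) with hPdef
  set R : ℝ := (t * (a + 1) * (x - a)) / ((1 - t) * (a - 1) * (a + x)) with hRdef
  have hC1 : 0 < C1 := by
    rw [hC1def]
    exact mul_pos_of_neg_of_neg (div_neg_of_neg_of_pos (by linarith) ht0)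
      (div_neg_of_pos_of_neg (by linarith) (by linarith))
  have hP : 0 < P := by
    rw [hPdef]
    exact div_pos (mul_pos (mul_pos (by linarith) h1t) (by linarith))
      (mul_pos (by linarith) hxa')
  have hR : 0 < R := by
    rw [hRdef]
    exact div_pos (mul_pos (mul_pos ht0 (by linarith)) hxa')
      (mul_pos (mul_pos h1t ha1') (by linarith))
  have hax2 : (x ^ 2 : ℝ) ^ t = a ^ 2 := by
    rw [hadef, pow_two x, Real.mul_rpow hx0.le hx0.le, ← pow_two]
  have hKx : K x t = B1 * C1 ^ t := by
    unfold K
    rw [← hadef]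
  have hKx2 : K (x ^ 2) t = ((a ^ 2 - x ^ 2) / ((t - 1) * (x ^ 2 - 1))) *
      (((t - 1) / t) * ((a ^ 2 - 1) / (a ^ 2 - x ^ 2))) ^ t := by
    unfold K
    rw [hax2]
  have hB2eq : (a ^ 2 - x ^ 2) / ((t - 1) * (x ^ 2 - 1)) = P * B1 ^ 2 := by
    rw [hPdef, hB1def]; exact split1 x a t h1 h2 h3 h4 h5 ht1'
  have hC2eq : ((t - 1) / t) * ((a ^ 2 - 1) / (a ^ 2 - x ^ 2)) = R * C1 ^ 2 := by
    rw [hRdef, hC1def]; exact split2 x a t h1' h4 h5 h6 h7 h8 ht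
  have hC1sq : ((C1 ^ 2 : ℝ)) ^ t = (C1 ^ t) ^ 2 := by
    rw [← Real.rpow_natCast C1 2, ← Real.rpow_natCast (C1 ^ t) 2,
      ← Real.rpow_mul hC1.le, ← Real.rpow_mul hC1.le]
    norm_num [mul_comm]
  have hsplit : K (x ^ 2) t = (P * R ^ t) * (K x t) ^ 2 := by
    rw [hKx2, hB2eq, hC2eq, Real.mul_rpow hR.le (sq_nonneg C1), hC1sq, hKx]
    ring
  have hPRle : P * R ^ t ≤ 1 := by
    have hsplit2 : P * R ^ t = P ^ (1 - t) * (P * R) ^ t := by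
      rw [Real.mul_rpow hP.le hR.le, ← mul_assoc, ← Real.rpow_add hP,
        show (1:ℝ) - t + t = 1 by ring, Real.rpow_one]
    have hgeo := Real.geom_mean_le_arith_mean2_weighted (le_of_lt h1t) ht0.le hP.le
      (mul_nonneg hP.le hR.le) (by ring : 1 - t + t = 1)
    have hfin : (1 - t) * P + t * (P * R)
        = ((x - 1) / (x + 1)) *
          (t ^ 2 * ((a + 1) / (a - 1)) + (1 - t) ^ 2 * ((x + a) / (x - a))) := by
      rw [hPdef, hRdef]; exact split3 x a t h2 h3 h4 h6 h7 h8
    have hfin2 : ((x - 1) / (x + 1)) *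
        (t ^ 2 * ((a + 1) / (a - 1)) + (1 - t) ^ 2 * ((x + a) / (x - a)))
        ≤ ((x - 1) / (x + 1)) * ((x + 1) / (x - 1)) :=
      mul_le_mul_of_nonneg_left hkey (div_nonneg (by linarith) (by linarith))
    have hone : ((x - 1) / (x + 1)) * ((x + 1) / (x - 1)) = 1 := by
      rw [div_mul_div_comm, mul_comm]
      exact div_self (by positivity)
    calc P * R ^ t = P ^ (1 - t) * (P * R) ^ t := hsplit2
      _ ≤ (1 - t) * P + t * (P * R) := hgeo
      _ = _ := hfin
      _ ≤ ((x - 1) / (x + 1)) * ((x + 1) / (x - 1)) := hfin2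
      _ = 1 := hone
  calc K (x ^ 2) t = (P * R ^ t) * (K x t) ^ 2 := hsplit
    _ ≤ 1 * (K x t) ^ 2 := mul_le_mul_of_nonneg_right hPRle (sq_nonneg _)
    _ = (K x t) ^ 2 := one_mul _

theorem K_sq_le (x t : ℝ) (hx : 0 < x) (hx1 : x ≠ 1) (ht0 : 0 < t) (ht1 : t < 1) :
    K (x ^ 2) t ≤ (K x t) ^ 2 := by
  rcases lt_or_gt_of_ne hx1 with h | h
  · have hxi : 1 < x⁻¹ := by
      rw [← one_div]; exact (one_lt_div hx).2 h
    have h1 := K_sq_le_of_one_lt hxi ht0 ht1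
    rw [K_inv hx hx1 ht0 ht1] at h1
    rw [inv_pow] at h1
    have hx2 : x ^ 2 ≠ 1 := ne_of_lt (by nlinarith)
    rw [K_inv (pow_pos hx 2) hx2 ht0 ht1] at h1
    exact h1
  · exact K_sq_le_of_one_lt h ht0 ht1
end

section
/- For the generalized Kantorovich constant K(x,t), one has K(x², t) ≥ K(x,t)² for all x > 0, x ≠ 1, and all t > 1. -/
open Real

lemma tangent_le_rpow {y b t : ℝ} (hy : 0 < y) (hb : 0 < b) (ht : 1 ≤ t) :
    b ^ t + t * b ^ (t - 1) * (y - b) ≤ y ^ t := by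
  have hs : (-1 : ℝ) ≤ y / b - 1 := by
    have : 0 < y / b := div_pos hy hb
    linarith
  have h := one_add_mul_self_le_rpow_one_add hs ht
  rw [show (1:ℝ) + (y / b - 1) = y / b by ring] at h
  rw [div_rpow hy.le hb.le] at h
  have hbt : (0:ℝ) < b ^ t := rpow_pos_of_pos hb t
  have hb1 : b ^ (t - 1) * b = b ^ t := by
    rw [← Real.rpow_add_one hb.ne' (t-1)]
    congr 1; ring
  have h2 := mul_le_mul_of_nonneg_right h hbt.le
  rw [div_mul_cancel₀ _ hbt.ne'] at h2
  have e : (1 + t * (y / b - 1)) * b ^ t = b ^ t + t * b ^ (t-1) * (y - b) := by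
    rw [← hb1]; field_simp
  linarith [e ▸ h2]

lemma K_signs {h t : ℝ} (hh : 0 < h) (h1 : h ≠ 1) (ht : 1 < t) :
    0 < (h ^ t - h) * (h - 1) ∧ 0 < (h ^ t - 1) * (h - 1) := by
  rcases lt_or_gt_of_ne h1 with hlt | hgt
  · have h2 : h ^ t < h := by
      calc h ^ t < h ^ (1:ℝ) := Real.rpow_lt_rpow_of_exponent_gt hh hlt ht
      _ = h := Real.rpow_one h
    constructor <;> nlinarith
  · have h2 : h < h ^ t := by
      calc h = h ^ (1:ℝ) := (Real.rpow_one h).symm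
      _ < h ^ t := Real.rpow_lt_rpow_of_exponent_lt hgt ht
    constructor <;> nlinarith

lemma K_line {h t : ℝ} (hh : 0 < h) (h1 : h ≠ 1) (ht : 1 < t) :
    0 < t * (h ^ t - h) / ((t - 1) * (h ^ t - 1)) ∧
    K h t * (t * (h ^ t - h) / ((t - 1) * (h ^ t - 1))) ^ t
      = (h ^ t - 1) / (h - 1) * (t * (h ^ t - h) / ((t - 1) * (h ^ t - 1))) + (h - h ^ t) / (h - 1) ∧
    ∀ y : ℝ, 0 < y → (h ^ t - 1) / (h - 1) * y + (h - h ^ t) / (h - 1) ≤ K h t * y ^ t := by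
  obtain ⟨s1, s2⟩ := K_signs hh h1 ht
  set a := h ^ t with ha
  have ht0 : (0:ℝ) < t := by linarith
  have ht1 : (0:ℝ) < t - 1 := by linarith
  have hne1 : h - 1 ≠ 0 := sub_ne_zero.mpr h1
  have hah : a - h ≠ 0 := by intro hE; rw [hE, zero_mul] at s1; exact lt_irrefl 0 s1
  have ha1 : a - 1 ≠ 0 := by intro hE; rw [hE, zero_mul] at s2; exact lt_irrefl 0 s2
  set w := ((t - 1) / t) * ((a - 1) / (a - h)) with hwdef
  have hw : 0 < w := by
    have e : w = ((t-1)/t) * (((a-1)*(h-1)) / ((a-h)*(h-1))) := by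
      rw [hwdef]; congr 1
      rw [mul_div_mul_right _ _ hne1]
    rw [e]
    exact mul_pos (div_pos ht1 ht0) (div_pos s2 s1)
  set y0 := t * (a - h) / ((t - 1) * (a - 1)) with hy0def
  have hy0w : y0 = w⁻¹ := by
    rw [hy0def, hwdef]
    field_simp
  have hy0 : 0 < y0 := by rw [hy0w]; exact inv_pos.mpr hw
  have hK : K h t = ((a - h) / ((t - 1) * (h - 1))) * w ^ t := rfl
  have hyw : y0 ^ (t - 1) = (w ^ (t - 1))⁻¹ := by
    rw [hy0w, ← Real.inv_rpow hw.le]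
  have hwt : w ^ t * (w ^ (t - 1))⁻¹ = w := by
    have e : w ^ t / w ^ (t - 1) = w ^ (t - (t - 1)) := (Real.rpow_sub hw t (t-1)).symm
    rw [div_eq_mul_inv] at e
    rw [e, show t - (t-1) = 1 by ring, Real.rpow_one]
  have id1 : K h t * (t * y0 ^ (t - 1)) = (a - 1) / (h - 1) := by
    calc K h t * (t * y0 ^ (t-1))
        = ((a - h) / ((t - 1) * (h - 1))) * (w ^ t * (w ^ (t-1))⁻¹) * t := by
          rw [hK, hyw]; ring
      _ = ((a - h) / ((t - 1) * (h - 1))) * w * t := by rw [hwt]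
      _ = (a - 1) / (h - 1) := by rw [hwdef]; field_simp
  have hy0t : y0 ^ t = y0 ^ (t - 1) * y0 := by
    rw [← Real.rpow_add_one hy0.ne' (t-1)]
    congr 1; ring
  have id2 : K h t * y0 ^ t = (a - 1) / (h - 1) * y0 + (h - a) / (h - 1) := by
    have e : K h t * y0 ^ t = (K h t * (t * y0 ^ (t-1))) * y0 / t := by
      rw [hy0t]; field_simp
    rw [e, id1, hy0def]
    field_simp
    ring
  refine ⟨hy0, id2, ?_⟩
  intro y hy
  have hKpos : 0 < K h t := by
    rw [hK]
    have e : (a - h) / ((t - 1) * (h - 1)) = ((a-h)*(h-1)) / ((t-1)*(h-1)^2) := by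
      field_simp
    refine mul_pos (e ▸ div_pos s1 (by positivity)) (Real.rpow_pos_of_pos hw t)
  have tang := tangent_le_rpow hy hy0 ht.le
  have h2 := mul_le_mul_of_nonneg_left tang hKpos.le
  have e2 : K h t * (y0 ^ t + t * y0 ^ (t-1) * (y - y0))
      = K h t * y0 ^ t + (K h t * (t * y0 ^ (t-1))) * (y - y0) := by ring
  rw [e2, id1, id2] at h2
  have e3 : (a - 1) / (h - 1) * y0 + (h - a) / (h - 1) + (a - 1) / (h - 1) * (y - y0)
      = (a - 1) / (h - 1) * y + (h - a) / (h - 1) := by ring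
  linarith [h2, e3]

lemma pos_div_of_pos_mul {u v : ℝ} (h : 0 < u * v) (hv : v ≠ 0) : 0 < u / v := by
  rcases lt_or_gt_of_ne hv with h' | h'
  · exact div_pos_of_neg_of_neg (by nlinarith) h'
  · exact div_pos (by nlinarith) h'

lemma sq_rpow {y t : ℝ} (hy : 0 < y) : (y ^ 2) ^ t = (y ^ t) ^ 2 := by
  rw [← Real.rpow_natCast y 2, ← Real.rpow_natCast (y ^ t) 2,
    ← Real.rpow_mul hy.le, ← Real.rpow_mul hy.le]
  norm_num [mul_comm]

theorem K_sq_ge (x t : ℝ) (hx : 0 < x) (hx1 : x ≠ 1) (ht : 1 < t) :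
    (K x t) ^ 2 ≤ K (x ^ 2) t := by
  obtain ⟨s1, s2⟩ := K_signs hx hx1 ht
  have ht1 : (0:ℝ) < t - 1 := by linarith
  have hne1 : x - 1 ≠ 0 := sub_ne_zero.mpr hx1
  have hxp1 : (0:ℝ) < x + 1 := by linarith
  have hne2 : x ^ 2 - 1 ≠ 0 := by
    intro hE
    have h0 : (x - 1) * (x + 1) = 0 := by linear_combination hE
    rcases mul_eq_zero.mp h0 with h' | h'
    · exact hne1 h'
    · linarith
  have hx2 : (0:ℝ) < x ^ 2 := by positivity
  have hx21 : x ^ 2 ≠ 1 := fun hE => hne2 (by rw [hE]; ring)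
  obtain ⟨hy0, heq, _⟩ := K_line hx hx1 ht
  obtain ⟨_, _, hineq'⟩ := K_line hx2 hx21 ht
  set a := x ^ t with ha
  have hA : (x ^ 2) ^ t = a ^ 2 := by
    rw [ha, ← Real.rpow_natCast x 2, ← Real.rpow_natCast (x ^ t) 2,
      ← Real.rpow_mul hx.le, ← Real.rpow_mul hx.le]
    norm_num [mul_comm]
  have ha1 : a - 1 ≠ 0 := by intro hE; rw [hE, zero_mul] at s2; exact lt_irrefl 0 s2
  set y0 := t * (a - x) / ((t - 1) * (a - 1)) with hy0def
  have hapos : 0 < a := Real.rpow_pos_of_pos hx t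
  have hB1 : 0 ≤ a - 1 - t * (x - 1) := by
    have h := one_add_mul_self_le_rpow_one_add (show (-1:ℝ) ≤ x - 1 by linarith) ht.le
    rw [show (1:ℝ) + (x - 1) = x by ring, ← ha] at h
    linarith
  have hB2 : 0 ≤ x * a * (t - 1) - t * a + x := by
    have hxi : (0:ℝ) < x⁻¹ := by positivity
    have h := one_add_mul_self_le_rpow_one_add (show (-1:ℝ) ≤ x⁻¹ - 1 by linarith) ht.le
    rw [show (1:ℝ) + (x⁻¹ - 1) = x⁻¹ by ring, Real.inv_rpow hx.le, ← ha] at h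
    have h2 := mul_le_mul_of_nonneg_right h (show (0:ℝ) ≤ x * a by positivity)
    have e1 : (1 + t * (x⁻¹ - 1)) * (x * a) = x * a + t * a - t * (x * a) := by
      field_simp; ring
    have e2 : a⁻¹ * (x * a) = x := by field_simp
    rw [e1, e2] at h2
    linarith
  have hprod : (y0 - 1) * (y0 - x) ≤ 0 := by
    have e : (y0 - 1) * (y0 - x)
        = -((a - 1 - t * (x - 1)) * (x * a * (t - 1) - t * a + x) / ((t - 1) * (a - 1)) ^ 2) := by
      rw [hy0def]
      field_simp
      ring
    rw [e]
    have h0 : 0 ≤ (a - 1 - t * (x - 1)) * (x * a * (t - 1) - t * a + x) / ((t - 1) * (a - 1)) ^ 2 :=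
      div_nonneg (mul_nonneg hB1 hB2) (by positivity)
    linarith
  have hmu : 0 ≤ (a - 1) / (x - 1) := le_of_lt (pos_div_of_pos_mul s2 hne1)
  have hs : 0 ≤ (a - x) / (x ^ 2 - 1) := by
    have h0 : 0 < (a - x) * (x ^ 2 - 1) := by nlinarith
    exact le_of_lt (pos_div_of_pos_mul h0 hne2)
  have quad : (a ^ 2 - 1) / (x ^ 2 - 1) * y0 ^ 2 + (x ^ 2 - a ^ 2) / (x ^ 2 - 1)
      - ((a - 1) / (x - 1) * y0 + (x - a) / (x - 1)) ^ 2
      = 2 * ((a - 1) / (x - 1)) * ((a - x) / (x ^ 2 - 1)) * (-((y0 - 1) * (y0 - x))) := by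
    field_simp
    ring
  have key2 : ((a - 1) / (x - 1) * y0 + (x - a) / (x - 1)) ^ 2
      ≤ (a ^ 2 - 1) / (x ^ 2 - 1) * y0 ^ 2 + (x ^ 2 - a ^ 2) / (x ^ 2 - 1) := by
    have h0 : 0 ≤ 2 * ((a - 1) / (x - 1)) * ((a - x) / (x ^ 2 - 1)) * (-((y0 - 1) * (y0 - x))) := by
      apply mul_nonneg
      · apply mul_nonneg
        · apply mul_nonneg
          · norm_num
          · exact hmu
        · exact hs
      · linarith
    linarith [quad, h0]
  have hineq := hineq' (y0 ^ 2) (by positivity)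
  rw [hA, sq_rpow hy0] at hineq
  have main : (K x t) ^ 2 * (y0 ^ t) ^ 2 ≤ K (x ^ 2) t * (y0 ^ t) ^ 2 := by
    calc (K x t) ^ 2 * (y0 ^ t) ^ 2 = (K x t * y0 ^ t) ^ 2 := by ring
    _ = ((a - 1) / (x - 1) * y0 + (x - a) / (x - 1)) ^ 2 := by rw [heq]
    _ ≤ (a ^ 2 - 1) / (x ^ 2 - 1) * y0 ^ 2 + (x ^ 2 - a ^ 2) / (x ^ 2 - 1) := key2
    _ ≤ K (x ^ 2) t * (y0 ^ t) ^ 2 := hineq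
  have hP2 : (0:ℝ) < (y0 ^ t) ^ 2 := by positivity
  exact le_of_mul_le_mul_right main hP2
end

section
/- Let A and B be positive definite matrices (or operators) with the weighted geometric mean A♯_t B = A^{1/2}(A^{-1/2} B A^{-1/2})^t A^{1/2} and the weighted spectral geometric mean A♮_t B = (A^{-1}♯ B)^t A (A^{-1}♯ B)^t, for 0 ≤ t ≤ 1, where ♯ = ♯_{1/2}. Then X = A♮_t B is the unique positive definite solution of the equation A^{-1} ♯ X = (A^{-1} ♯ B)^t. -/
/-!
For positive definite `A`, the maps `G ↦ G A G` and `X ↦ A⁻¹ ♯ X` are mutually inverse on positive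
definite matrices. Indeed, with `P = A^{-1/2}` and `Q = A^{1/2}` we have `A⁻¹ ♯ X = P S P` where
`S² = Q X Q`, so `(A⁻¹ ♯ X) A (A⁻¹ ♯ X) = P S² P = X`; and `Q (G A G) Q = (Q G Q)²`, so by uniqueness
of positive square roots `A⁻¹ ♯ (G A G) = P Q G Q P = G`. Since `A ♮ₜ B = G A G` with the positive
definite `G = (A⁻¹ ♯ B)^t`, it solves the equation, and any solution `X` equals
`(A⁻¹ ♯ X) A (A⁻¹ ♯ X) = G A G`.
-/

open Matrix

variable {n : Type*} [Fintype n] [DecidableEq n]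

/-- Real power of a matrix, defined via the spectral decomposition for Hermitian matrices. -/
noncomputable def mpow (A : Matrix n n ℝ) (t : ℝ) : Matrix n n ℝ :=
  if hA : A.IsHermitian then
    (hA.eigenvectorUnitary : Matrix n n ℝ) * Matrix.diagonal (fun i => hA.eigenvalues i ^ t) *
      star (hA.eigenvectorUnitary : Matrix n n ℝ)
  else A

/-- The weighted geometric mean `A ♯ₜ B = A^{1/2} (A^{-1/2} B A^{-1/2})^t A^{1/2}`. -/
noncomputable def gmean (t : ℝ) (A B : Matrix n n ℝ) : Matrix n n ℝ :=
  mpow A (1/2) * mpow (mpow A (-(1/2)) * B * mpow A (-(1/2))) t * mpow A (1/2)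

/-- The weighted spectral geometric mean `A ♮ₜ B = (A⁻¹ ♯ B)^t A (A⁻¹ ♯ B)^t`. -/
noncomputable def smean (t : ℝ) (A B : Matrix n n ℝ) : Matrix n n ℝ :=
  mpow (gmean (1/2) A⁻¹ B) t * A * mpow (gmean (1/2) A⁻¹ B) t

open scoped MatrixOrder

section

variable {A G M X : Matrix n n ℝ}

lemma mpow_eq_cfc (hA : A.IsHermitian) (t : ℝ) : mpow A t = cfc (fun x : ℝ => x ^ t) A := by
  rw [mpow, dif_pos hA, hA.cfc_eq, IsHermitian.cfc, Unitary.conjStarAlgAut_apply]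
  rfl

lemma mpow_eq_rpow (hA : A.PosSemidef) (t : ℝ) : mpow A t = A ^ t := by
  rw [mpow_eq_cfc hA.isHermitian, CFC.rpow_eq_cfc_real hA.nonneg]

lemma Matrix.PosDef.mpow (hA : A.PosDef) (t : ℝ) : (mpow A t).PosDef := by
  rw [mpow_eq_rpow hA.posSemidef]
  exact (IsStrictlyPositive.rpow A t hA.isStrictlyPositive).posDef

lemma mpow_add (hA : A.PosDef) (s t : ℝ) : mpow A (s + t) = mpow A s * mpow A t := by
  simp only [mpow_eq_rpow hA.posSemidef]
  exact CFC.rpow_add hA.isUnit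

lemma mpow_zero (hA : A.PosSemidef) : mpow A 0 = 1 := by
  rw [mpow_eq_rpow hA, CFC.rpow_zero A hA.nonneg]

lemma mpow_neg_one (hA : A.PosDef) : mpow A (-1) = A⁻¹ := by
  rw [mpow_eq_rpow hA.posSemidef, nonsing_inv_eq_ringInverse,
    CFC.inverse_eq_rpow_neg_one hA.isStrictlyPositive]

lemma mpow_half_mul_self (hA : A.PosSemidef) : mpow A (1/2) * mpow A (1/2) = A := by
  rw [mpow_eq_rpow hA, ← CFC.sqrt_eq_rpow, CFC.sqrt_mul_sqrt_self A hA.nonneg]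

lemma mpow_mul_self_half (hA : A.PosSemidef) : mpow (A * A) (1/2) = A := by
  have hAA : (A * A).PosSemidef := by
    simpa only [hA.isHermitian.eq] using posSemidef_conjTranspose_mul_self A
  rw [mpow_eq_rpow hAA, ← CFC.sqrt_eq_rpow, CFC.sqrt_mul_self A hA.nonneg]

lemma mpow_half_mul_mpow_neg_half (hA : A.PosDef) : mpow A (1/2) * mpow A (-(1/2)) = 1 := by
  rw [← mpow_add hA, add_neg_cancel, mpow_zero hA.posSemidef]

lemma mpow_neg_half_mul_mpow_half (hA : A.PosDef) : mpow A (-(1/2)) * mpow A (1/2) = 1 := by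
  rw [← mpow_add hA, neg_add_cancel, mpow_zero hA.posSemidef]

lemma mpow_neg_half_mul_self (hA : A.PosDef) : mpow A (-(1/2)) * mpow A (-(1/2)) = A⁻¹ := by
  rw [← mpow_add hA, ← mpow_neg_one hA]
  norm_num

omit [DecidableEq n] in
lemma Matrix.PosSemidef.mul_mul_same (hM : M.PosSemidef) (hG : G.IsHermitian) :
    (G * M * G).PosSemidef := by
  simpa only [hG.eq] using hM.conjTranspose_mul_mul_same G

lemma Matrix.PosDef.mul_mul_same (hM : M.PosDef) (hG : G.IsHermitian) (hGu : IsUnit G) :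
    (G * M * G).PosDef := by
  simpa only [hG.eq] using hM.conjTranspose_mul_mul_same (mulVec_injective_of_isUnit hGu)

lemma Matrix.PosDef.gmean (hA : A.PosDef) (hX : X.PosDef) (t : ℝ) : (gmean t A X).PosDef :=
  have hP := hA.mpow (1/2)
  have hQ := hA.mpow (-(1/2))
  ((hX.mul_mul_same hQ.isHermitian hQ.isUnit).mpow t).mul_mul_same hP.isHermitian hP.isUnit

lemma gmean_half_mul_inv_mul_gmean_half (hA : A.PosDef) (hX : X.PosSemidef) :
    gmean (1/2) A X * A⁻¹ * gmean (1/2) A X = X := by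
  have hSS := mpow_half_mul_self (hX.mul_mul_same (hA.mpow (-(1/2))).isHermitian)
  have hPQ := mpow_half_mul_mpow_neg_half hA
  have hQP := mpow_neg_half_mul_mpow_half hA
  rw [gmean, ← mpow_neg_half_mul_self hA]
  generalize mpow A (1/2) = P at *
  generalize mpow A (-(1/2)) = Q at *
  generalize mpow (Q * X * Q) (1/2) = S at *
  calc P * S * P * (Q * Q) * (P * S * P) = P * S * (P * Q) * (Q * P) * S * P := by
        simp only [mul_assoc]
    _ = P * (Q * X * Q) * P := by rw [hPQ, hQP, ← hSS]; simp only [mul_one, mul_assoc]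
    _ = (P * Q) * X * (Q * P) := by simp only [mul_assoc]
    _ = X := by rw [hPQ, hQP, one_mul, mul_one]

lemma gmean_half_mul_inv_mul (hA : A.PosDef) (hG : G.PosSemidef) :
    gmean (1/2) A (G * A⁻¹ * G) = G := by
  have hQGQ := hG.mul_mul_same (hA.mpow (-(1/2))).isHermitian
  have hPQ := mpow_half_mul_mpow_neg_half hA
  have hQP := mpow_neg_half_mul_mpow_half hA
  rw [gmean, ← mpow_neg_half_mul_self hA]
  generalize mpow A (1/2) = P at *
  generalize mpow A (-(1/2)) = Q at *
  calc P * mpow (Q * (G * (Q * Q) * G) * Q) (1/2) * P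
      = P * mpow ((Q * G * Q) * (Q * G * Q)) (1/2) * P := by simp only [mul_assoc]
    _ = (P * Q) * G * (Q * P) := by rw [mpow_mul_self_half hQGQ]; simp only [mul_assoc]
    _ = G := by rw [hPQ, hQP, one_mul, mul_one]

end

theorem smean_unique_solution_general (t : ℝ)
    (A B : Matrix n n ℝ) (hA : A.PosDef) (hB : B.PosDef) :
    ((smean t A B).PosDef ∧
      gmean (1/2) A⁻¹ (smean t A B) = mpow (gmean (1/2) A⁻¹ B) t) ∧
    ∀ X : Matrix n n ℝ, X.PosDef →
      gmean (1/2) A⁻¹ X = mpow (gmean (1/2) A⁻¹ B) t → X = smean t A B := by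
  have hG : (mpow (gmean (1/2) A⁻¹ B) t).PosDef := (hA.inv.gmean hB _).mpow t
  have hA_inv_inv : A⁻¹⁻¹ = A :=
    nonsing_inv_nonsing_inv A ((isUnit_iff_isUnit_det A).mp hA.isUnit)
  refine ⟨⟨hA.mul_mul_same hG.isHermitian hG.isUnit, ?_⟩, fun X hX hXeq => ?_⟩
  · simpa only [smean, hA_inv_inv] using gmean_half_mul_inv_mul hA.inv hG.posSemidef
  · rw [smean, ← hXeq]
    simpa only [hA_inv_inv] using (gmean_half_mul_inv_mul_gmean_half hA.inv hX.posSemidef).symm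

theorem smean_unique_solution (t : ℝ) (ht0 : 0 ≤ t) (ht1 : t ≤ 1)
    (A B : Matrix n n ℝ) (hA : A.PosDef) (hB : B.PosDef) :
    ((smean t A B).PosDef ∧
      gmean (1/2) A⁻¹ (smean t A B) = mpow (gmean (1/2) A⁻¹ B) t) ∧
    ∀ X : Matrix n n ℝ, X.PosDef →
      gmean (1/2) A⁻¹ X = mpow (gmean (1/2) A⁻¹ B) t → X = smean t A B :=
  smean_unique_solution_general t A B hA hB
end

section
/- Let A, B be self-adjoint matrices with 0 < A ≤ B (Loewner order) and m·I ≤ A ≤ M·I for scalars 0 < m ≤ M. Then A² ≤ ((M+m)²/(4Mm))·B². -/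
open Matrix

open scoped MatrixOrder

/-!
With `K = (M + m)² / (4Mm)` and `c = 2Mm / (M + m)` one has the identity
`K b² - a² = K (b - c)² + (M + m) (b - a) + (M - a) (a - m)`,
since `K c = (M + m) / 2` and `K c² = Mm`. Each summand is nonnegative: the first is a multiple
of the square of a self-adjoint element, the second because `a ≤ b`, and the third is a product of
two commuting nonnegative elements, both functions of `a`.
-/

theorem smul_mul_self_sub_mul_self_eq {A : Type*} [Ring A] [Algebra ℝ A] {m M : ℝ}
    (hm : m ≠ 0) (hM : M ≠ 0) (hMm : M + m ≠ 0) (a b : A) :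
    ((M + m) ^ 2 / (4 * M * m)) • (b * b) - a * a =
      ((M + m) ^ 2 / (4 * M * m)) •
          ((b - (2 * M * m / (M + m)) • 1) * (b - (2 * M * m / (M + m)) • 1))
        + (M + m) • (b - a) + (M • 1 - a) * (a - m • 1) := by
  simp only [sub_mul, mul_sub, smul_mul_assoc, mul_smul_comm, smul_smul, mul_one, one_mul,
    smul_sub]
  match_scalars <;> field_simp <;> ring

section StarOrderedAlgebra

variable {A : Type*} [Ring A] [PartialOrder A] [StarRing A] [StarOrderedRing A] [Algebra ℝ A]
  [TopologicalSpace A] [ContinuousFunctionalCalculus ℝ A IsSelfAdjoint] [NonnegSpectrumClass ℝ A]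

theorem sub_mul_sub_nonneg_of_le {a : A} {m M : ℝ} (hma : m • 1 ≤ a) (haM : a ≤ M • 1) :
    0 ≤ (M • 1 - a) * (a - m • 1) :=
  Commute.mul_nonneg (sub_nonneg.2 haM) (sub_nonneg.2 hma) <|
    (((Commute.one_left a).smul_left M).sub_left (.refl a)).sub_right
      ((Commute.one_right _).smul_right m)

theorem mul_self_le_smul_mul_self_of_le [StarModule ℝ A] {a b : A} {m M : ℝ} (hm : 0 < m)
    (hmM : m ≤ M) (hb : IsSelfAdjoint b) (hab : a ≤ b) (hma : m • 1 ≤ a) (haM : a ≤ M • 1) :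
    a * a ≤ ((M + m) ^ 2 / (4 * M * m)) • (b * b) := by
  have hM : 0 < M := hm.trans_le hmM
  rw [← sub_nonneg, smul_mul_self_sub_mul_self_eq hm.ne' hM.ne' (by positivity)]
  have hbc : IsSelfAdjoint (b - (2 * M * m / (M + m)) • (1 : A)) :=
    hb.sub ((IsSelfAdjoint.all _).smul (.one A))
  refine add_nonneg (add_nonneg ?_ ?_) (sub_mul_sub_nonneg_of_le hma haM)
  · exact smul_nonneg (by positivity) hbc.mul_self_nonneg
  · exact smul_nonneg (by positivity) (sub_nonneg.2 hab)

end StarOrderedAlgebra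

theorem sq_le_of_le_general {n : Type*} [Fintype n] [DecidableEq n]
    (m M : ℝ) (hm : 0 < m) (hmM : m ≤ M)
    (A B : Matrix n n ℝ) (hB : B.IsHermitian)
    (hAB : (B - A).PosSemidef)
    (hmA : (A - m • (1 : Matrix n n ℝ)).PosSemidef)
    (hAM : (M • (1 : Matrix n n ℝ) - A).PosSemidef) :
    (((M + m) ^ 2 / (4 * M * m)) • (B * B) - A * A).PosSemidef :=
  -- under `MatrixOrder`, `X ≤ Y` unfolds to `(Y - X).PosSemidef` and `IsSelfAdjoint` to `IsHermitian`
  mul_self_le_smul_mul_self_of_le hm hmM hB hAB hmA hAM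

theorem sq_le_of_le {n : Type*} [Fintype n] [DecidableEq n]
    (m M : ℝ) (hm : 0 < m) (hmM : m ≤ M)
    (A B : Matrix n n ℝ) (hA : A.PosDef) (hB : B.IsHermitian)
    (hAB : (B - A).PosSemidef)
    (hmA : (A - m • (1 : Matrix n n ℝ)).PosSemidef)
    (hAM : (M • (1 : Matrix n n ℝ) - A).PosSemidef) :
    (((M + m) ^ 2 / (4 * M * m)) • (B * B) - A * A).PosSemidef :=
  sq_le_of_le_general m M hm hmM A B hB hAB hmA hAM
end

section
/- Let A be a positive definite matrix with m·I ≤ A ≤ M·I for 0 < m ≤ M, and let Φ be a unital positive linear map on matrices. Then Φ(A^{-1}) ≤ ((M+m)²/(4Mm))·Φ(A)^{-1}. -/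
/-!
On `[m, M]` the chord of `x ↦ 1 / x` lies above its graph, `1 / x ≤ (M + m - x) / (M m)`, so by
the functional calculus `A⁻¹ ≤ ((M + m) - A) / (M m)`. A unital positive map preserves this affine
bound: `Φ (A⁻¹) ≤ ((M + m) - Φ A) / (M m)`. Finally `(M + m) - y ≤ (M + m)² / (4 y)` for `y > 0`
(AM-GM), and since `Φ A ≥ m > 0`, the functional calculus of `Φ A` turns the right-hand side into
`(M + m)² / (4 M m) • (Φ A)⁻¹`.
-/

section FunctionalCalculus

variable {A : Type*} [Ring A] [StarRing A] [Algebra ℝ A] {a : A}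

section

variable [TopologicalSpace A] [ContinuousFunctionalCalculus ℝ A IsSelfAdjoint]

lemma algebraMap_sub_smul_eq_cfc (α β : ℝ) (ha : IsSelfAdjoint a) :
    algebraMap ℝ A α - β • a = cfc (fun x ↦ α - β * x) a := by
  rw [cfc_sub _ _ a, cfc_const α a, cfc_const_mul β _ a, cfc_id' ℝ a]

lemma smul_ringInverse_eq_cfc (γ : ℝ) (ha : IsSelfAdjoint a) (h0 : 0 ∉ spectrum ℝ a) :
    γ • Ring.inverse a = cfc (fun x ↦ γ * x⁻¹) a := by
  -- discharges the continuity side conditions of the `cfc` lemmas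
  have hinv : ContinuousOn (·⁻¹) (spectrum ℝ a) :=
    continuousOn_inv₀.mono (Set.subset_compl_singleton_iff.2 h0)
  rw [cfc_const_mul γ (·⁻¹) a,
    cfc_ringInverse_id (R := ℝ) a ((spectrum.zero_mem_iff ℝ).not_left.1 h0)]

end

variable [PartialOrder A] [StarOrderedRing A] [StarModule ℝ A] {m M : ℝ}

lemma IsSelfAdjoint.of_algebraMap_le (hma : algebraMap ℝ A m ≤ a) : IsSelfAdjoint a := by
  simpa using (IsSelfAdjoint.algebraMap A (.all m)).add (.of_nonneg (sub_nonneg.2 hma))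

variable [TopologicalSpace A] [ContinuousFunctionalCalculus ℝ A IsSelfAdjoint]
  [NonnegSpectrumClass ℝ A]

lemma le_of_mem_spectrum_of_algebraMap_le (hma : algebraMap ℝ A m ≤ a) {x : ℝ}
    (hx : x ∈ spectrum ℝ a) : m ≤ x :=
  (algebraMap_le_iff_le_spectrum (IsSelfAdjoint.of_algebraMap_le hma)).1 hma x hx

lemma zero_notMem_spectrum_of_algebraMap_le (hm : 0 < m) (hma : algebraMap ℝ A m ≤ a) :
    0 ∉ spectrum ℝ a :=
  fun h ↦ (le_of_mem_spectrum_of_algebraMap_le hma h).not_gt hm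

lemma ringInverse_le_algebraMap_sub_smul (hm : 0 < m) (hma : algebraMap ℝ A m ≤ a)
    (haM : a ≤ algebraMap ℝ A M) :
    Ring.inverse a ≤ algebraMap ℝ A ((M + m) / (M * m)) - (M * m)⁻¹ • a := by
  have ha := IsSelfAdjoint.of_algebraMap_le hma
  have hlow : ∀ x ∈ spectrum ℝ a, m ≤ x := (algebraMap_le_iff_le_spectrum ha).1 hma
  have hup : ∀ x ∈ spectrum ℝ a, x ≤ M := (le_algebraMap_iff_spectrum_le ha).1 haM
  have h0 := zero_notMem_spectrum_of_algebraMap_le hm hma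
  have hinv : ContinuousOn (·⁻¹) (spectrum ℝ a) :=
    continuousOn_inv₀.mono (Set.subset_compl_singleton_iff.2 h0)
  rw [← one_smul ℝ (Ring.inverse a), smul_ringInverse_eq_cfc 1 ha h0,
    algebraMap_sub_smul_eq_cfc _ _ ha, cfc_le_iff _ _ a]
  intro x hx
  have hx0 : 0 < x := hm.trans_le (hlow x hx)
  have hM : 0 < M := hx0.trans_le (hup x hx)
  have hgap : (M + m) / (M * m) - (M * m)⁻¹ * x - 1 * x⁻¹ = (M - x) * (x - m) / (M * m * x) := by
    field_simp
    ring
  rw [← sub_nonneg, hgap]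
  exact div_nonneg (mul_nonneg (sub_nonneg.2 (hup x hx)) (sub_nonneg.2 (hlow x hx))) (by positivity)

lemma algebraMap_sub_smul_le_smul_ringInverse (hm : 0 < m) (hma : algebraMap ℝ A m ≤ a)
    (α : ℝ) {β : ℝ} (hβ : 0 < β) :
    algebraMap ℝ A α - β • a ≤ (α ^ 2 / (4 * β)) • Ring.inverse a := by
  have ha := IsSelfAdjoint.of_algebraMap_le hma
  have hpos x (hx : x ∈ spectrum ℝ a) : 0 < x :=
    hm.trans_le (le_of_mem_spectrum_of_algebraMap_le hma hx)
  have h0 := zero_notMem_spectrum_of_algebraMap_le hm hma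
  have hinv : ContinuousOn (·⁻¹) (spectrum ℝ a) :=
    continuousOn_inv₀.mono (Set.subset_compl_singleton_iff.2 h0)
  rw [smul_ringInverse_eq_cfc _ ha h0, algebraMap_sub_smul_eq_cfc _ _ ha, cfc_le_iff _ _ a]
  intro x hx
  have hx0 := hpos x hx
  have hgap : α ^ 2 / (4 * β) * x⁻¹ - (α - β * x) = (α - 2 * β * x) ^ 2 / (4 * β * x) := by
    field_simp
    ring
  rw [← sub_nonneg, hgap]
  positivity

variable {B : Type*} [Ring B] [StarRing B] [Algebra ℝ B] [PartialOrder B] [StarOrderedRing B]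
  [StarModule ℝ B] [TopologicalSpace B] [ContinuousFunctionalCalculus ℝ B IsSelfAdjoint]
  [NonnegSpectrumClass ℝ B]

theorem PositiveLinearMap.map_ringInverse_le (Φ : A →ₚ[ℝ] B) (hΦ1 : Φ 1 = 1) (hm : 0 < m)
    (hmM : m ≤ M) (hma : algebraMap ℝ A m ≤ a) (haM : a ≤ algebraMap ℝ A M) :
    Φ (Ring.inverse a) ≤ ((M + m) ^ 2 / (4 * M * m)) • Ring.inverse (Φ a) := by
  have hΦalg (r : ℝ) : Φ (algebraMap ℝ A r) = algebraMap ℝ B r := by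
    simp [Algebra.algebraMap_eq_smul_one, hΦ1]
  have hmΦa : algebraMap ℝ B m ≤ Φ a := hΦalg m ▸ Φ.monotone' hma
  have hMm : 0 < M * m := mul_pos (hm.trans_le hmM) hm
  calc Φ (Ring.inverse a)
      ≤ Φ (algebraMap ℝ A ((M + m) / (M * m)) - (M * m)⁻¹ • a) :=
        Φ.monotone' (ringInverse_le_algebraMap_sub_smul hm hma haM)
    _ = algebraMap ℝ B ((M + m) / (M * m)) - (M * m)⁻¹ • Φ a := by
        rw [map_sub, map_smul, hΦalg]
    _ ≤ (((M + m) / (M * m)) ^ 2 / (4 * (M * m)⁻¹)) • Ring.inverse (Φ a) :=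
        algebraMap_sub_smul_le_smul_ringInverse hm hmΦa _ (inv_pos.2 hMm)
    _ = ((M + m) ^ 2 / (4 * M * m)) • Ring.inverse (Φ a) := by
        congr 1
        field_simp

end FunctionalCalculus

open Matrix
open scoped MatrixOrder

theorem kantorovich_map_inv_general {n : Type*} [Fintype n] [DecidableEq n]
    (m M : ℝ) (hm : 0 < m) (hmM : m ≤ M)
    (A : Matrix n n ℝ)
    (hmA : (A - m • (1 : Matrix n n ℝ)).PosSemidef)
    (hAM : (M • (1 : Matrix n n ℝ) - A).PosSemidef)
    (Φ : Matrix n n ℝ →ₗ[ℝ] Matrix n n ℝ)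
    (hΦpos : ∀ X : Matrix n n ℝ, X.PosSemidef → (Φ X).PosSemidef)
    (hΦ1 : Φ 1 = 1) :
    (((M + m) ^ 2 / (4 * M * m)) • (Φ A)⁻¹ - Φ A⁻¹).PosSemidef := by
  let Ψ : Matrix n n ℝ →ₚ[ℝ] Matrix n n ℝ :=
    .mk₀ Φ fun X hX ↦ (hΦpos X (nonneg_iff_posSemidef.1 hX)).nonneg
  rw [nonsing_inv_eq_ringInverse, nonsing_inv_eq_ringInverse]
  exact Ψ.map_ringInverse_le hΦ1 hm hmM (a := A)
    (by rwa [Algebra.algebraMap_eq_smul_one]) (by rwa [Algebra.algebraMap_eq_smul_one])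

theorem kantorovich_map_inv {n : Type*} [Fintype n] [DecidableEq n]
    (m M : ℝ) (hm : 0 < m) (hmM : m ≤ M)
    (A : Matrix n n ℝ) (hA : A.PosDef)
    (hmA : (A - m • (1 : Matrix n n ℝ)).PosSemidef)
    (hAM : (M • (1 : Matrix n n ℝ) - A).PosSemidef)
    (Φ : Matrix n n ℝ →ₗ[ℝ] Matrix n n ℝ)
    (hΦpos : ∀ X : Matrix n n ℝ, X.PosSemidef → (Φ X).PosSemidef)
    (hΦ1 : Φ 1 = 1) :
    (((M + m) ^ 2 / (4 * M * m)) • (Φ A)⁻¹ - Φ A⁻¹).PosSemidef :=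
  kantorovich_map_inv_general m M hm hmM A hmA hAM Φ hΦpos hΦ1
end

section
/- For all a, b > 0 and 0 ≤ t ≤ 1, setting h = b/a and r = min{t, 1-t}, one has ((1+h)²/(4h))^r · a^{1-t} b^t ≤ (1-t)a + tb. -/
/-!
With `m = (a + b) / 2`, the improvement factor is `m ^ 2 / (a * b)`, so for `t ≤ 1 / 2` the
left-hand side collapses to `a ^ (1 - 2 t) * m ^ (2 t)`. The weighted AM-GM inequality with
weights `1 - 2 t` and `2 t` bounds this by `(1 - 2 t) a + 2 t m = (1 - t) a + t b`.
The case `t ≥ 1 / 2` follows by exchanging `a` and `b` and replacing `t` by `1 - t`.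
-/

open Real

lemma kantorovich_factor_eq {a b : ℝ} (ha : 0 < a) (hb : 0 < b) :
    (1 + b / a) ^ 2 / (4 * (b / a)) = ((a + b) / 2) ^ 2 / (a * b) := by
  field_simp
  ring

lemma kantorovich_factor_rpow_mul {a b : ℝ} (ha : 0 < a) (hb : 0 < b) (t : ℝ) :
    (((a + b) / 2) ^ 2 / (a * b)) ^ t * a ^ (1 - t) * b ^ t =
      a ^ (1 - 2 * t) * ((a + b) / 2) ^ (2 * t) := by
  rw [div_rpow (by positivity) (by positivity), mul_rpow ha.le hb.le, ← rpow_natCast,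
    ← rpow_mul (by positivity), rpow_sub ha, rpow_sub ha, rpow_one, Nat.cast_ofNat,
    mul_comm (2 : ℝ) t, rpow_mul ha.le, rpow_two]
  field_simp

lemma rpow_mul_midpoint_rpow_le {a b s : ℝ} (ha : 0 ≤ a) (hb : 0 ≤ b) (hs0 : 0 ≤ s)
    (hs : s ≤ 1 / 2) :
    a ^ (1 - 2 * s) * ((a + b) / 2) ^ (2 * s) ≤ (1 - s) * a + s * b := by
  have := geom_mean_le_arith_mean2_weighted (by linarith : 0 ≤ 1 - 2 * s)
    (by linarith : 0 ≤ 2 * s) ha (by positivity : 0 ≤ (a + b) / 2) (by ring)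
  linarith

lemma kantorovich_rpow_mul_le_of_le_half {a b t : ℝ} (ha : 0 < a) (hb : 0 < b) (ht0 : 0 ≤ t)
    (ht : t ≤ 1 / 2) :
    (((a + b) / 2) ^ 2 / (a * b)) ^ t * a ^ (1 - t) * b ^ t ≤ (1 - t) * a + t * b := by
  rw [kantorovich_factor_rpow_mul ha hb]
  exact rpow_mul_midpoint_rpow_le ha.le hb.le ht0 ht

theorem refined_am_gm (a b t : ℝ) (ha : 0 < a) (hb : 0 < b) (ht0 : 0 ≤ t) (ht1 : t ≤ 1) :
    ((1 + b / a) ^ 2 / (4 * (b / a))) ^ min t (1 - t) * a ^ (1 - t) * b ^ t ≤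
      (1 - t) * a + t * b := by
  rw [kantorovich_factor_eq ha hb]
  rcases le_total t (1 / 2) with ht | ht
  · rw [min_eq_left (by linarith)]
    exact kantorovich_rpow_mul_le_of_le_half ha hb ht0 ht
  · rw [min_eq_right (by linarith)]
    have := kantorovich_rpow_mul_le_of_le_half hb ha (by linarith) (by linarith : 1 - t ≤ 1 / 2)
    rw [add_comm b, mul_comm b, sub_sub_cancel] at this
    linarith
end
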